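/- arXiv:1209.0153 — 7 statements merged into one kernel-verified Lean document; each statement's English description precedes it below -/
import Mathlib

section
/- Let N be a prime and 1 ≤ d ≤ N, and let n = (n₁,…,n_d) and n′ = (n′₁,…,n′_d) be d-tuples of pairwise distinct elements of ℤ/Nℤ. Then the sets of vectors {φ_{m,n} : m ∈ ℤ/Nℤ} and {φ_{m,n′} : m ∈ ℤ/Nℤ} in ℂ^d are equal if and only if there exists a unit u ∈ (ℤ/Nℤ)ˣ such that n′_k = u·n_k for every k = 1,…,d. In other words, unordered DFT-FUNTFs are in one-to-one correspondence with the orbits of the coordinatewise multiplication action of (ℤ/Nℤ)ˣ on d-tuples of pairwise distinct elements of ℤ/Nℤ. -/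
open scoped BigOperators

/-- The `m`-th vector of the DFT-FUNTF associated to the generators `n = (n₁,…,n_d)`:
its `k`-th coordinate is `(1/√d)·ω^(m·n_k)` where `ω = exp(2πi/N)`. -/
noncomputable def dftVec (N d : ℕ) (n : Fin d → ZMod N) (m : ZMod N) : Fin d → ℂ :=
  fun k => ((1 / Real.sqrt d : ℝ) : ℂ) *
    Complex.exp (2 * Real.pi * Complex.I / N) ^ (m * n k).val

lemma dftVec_key (N d : ℕ) [NeZero N] (hd : 1 ≤ d) (n n' : Fin d → ZMod N)
    (m1 m2 : ZMod N) (h : dftVec N d n m1 = dftVec N d n' m2) :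
    ∀ k, m1 * n k = m2 * n' k := by
  intro k
  have hdpos : (0 : ℝ) < Real.sqrt d := Real.sqrt_pos.mpr (by exact_mod_cast hd)
  have hc : ((1 / Real.sqrt d : ℝ) : ℂ) ≠ 0 := by
    simp [Complex.ofReal_ne_zero, ne_of_gt hdpos]
  have hk := congrFun h k
  simp only [dftVec] at hk
  have hpow := mul_left_cancel₀ hc hk
  have hprim := Complex.isPrimitiveRoot_exp N (NeZero.ne N)
  have := hprim.pow_inj (ZMod.val_lt _) (ZMod.val_lt _) hpow
  exact ZMod.val_injective N this

/-- For `N` prime, two unordered DFT-FUNTFs coincide as sets of vectors iff their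
generating tuples lie in the same orbit of the coordinatewise multiplication action
of `(ℤ/Nℤ)ˣ`. -/
theorem dft_funtf_set_eq_iff_unit_mul (N d : ℕ) [NeZero N] (hN : N.Prime)
    (hd : 1 ≤ d) (hdN : d ≤ N) (n n' : Fin d → ZMod N)
    (hn : Function.Injective n) (hn' : Function.Injective n') :
    Set.range (dftVec N d n) = Set.range (dftVec N d n') ↔
      ∃ u : (ZMod N)ˣ, ∀ k, n' k = (u : ZMod N) * n k := by
  haveI : Fact N.Prime := ⟨hN⟩
  constructor
  · intro h
    -- dftVec n' 1 is in range of dftVec n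
    obtain ⟨u0, hu0⟩ : ∃ m', dftVec N d n m' = dftVec N d n' 1 := by
      have : dftVec N d n' 1 ∈ Set.range (dftVec N d n) := h ▸ Set.mem_range_self 1
      exact this
    have h1 : ∀ k, u0 * n k = n' k := by
      intro k
      have := dftVec_key N d hd n n' u0 1 hu0 k
      simpa using this
    by_cases hz : u0 = 0
    · -- then n' k = 0 for all k; also get symmetric relation
      obtain ⟨v0, hv0⟩ : ∃ m', dftVec N d n' m' = dftVec N d n 1 := by
        have : dftVec N d n 1 ∈ Set.range (dftVec N d n') := h ▸ Set.mem_range_self 1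
        exact this
      have h2 : ∀ k, v0 * n' k = n k := by
        intro k
        have := dftVec_key N d hd n' n v0 1 hv0 k
        simpa using this
      refine ⟨1, fun k => ?_⟩
      have hn'0 : n' k = 0 := by rw [← h1 k, hz, zero_mul]
      have hn0 : n k = 0 := by rw [← h2 k, hn'0, mul_zero]
      simp [hn'0, hn0]
    · exact ⟨(isUnit_iff_ne_zero.mpr hz).unit, fun k => by
        rw [IsUnit.unit_spec]; exact (h1 k).symm⟩
  · rintro ⟨u, hu⟩
    apply Set.eq_of_subset_of_subset
    · rintro _ ⟨m, rfl⟩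
      refine ⟨m * (u : ZMod N)⁻¹, ?_⟩
      funext k
      simp only [dftVec, hu k]
      congr 2
      rw [← mul_assoc, mul_assoc m, ZMod.inv_mul_of_unit _ u.isUnit, mul_one]
    · rintro _ ⟨m, rfl⟩
      refine ⟨m * (u : ZMod N), ?_⟩
      funext k
      simp only [dftVec, hu k]
      congr 2
      rw [mul_assoc]
end

section
/- Let N be a prime and 1 ≤ d ≤ N. Consider the action of the unit group (ℤ/Nℤ)ˣ on the set of d-tuples of pairwise distinct elements of ℤ/Nℤ by coordinatewise multiplication. The number of orbits of this action equals: 2, if d = 1, or if d = N = 2; and N·(N−2)·(N−3)⋯(N−d+1) (the product N·∏_{j=2}^{d−1}(N−j)), if d ≥ 2 and N > 2. -/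
open scoped BigOperators

/-!
For `d ≥ 2` an injective tuple has a nonzero entry, which a unit can only fix if it is `1`;
so `(ℤ/Nℤ)ˣ` acts freely and the number of orbits is `N(N-1)⋯(N-d+1) / (N-1)`.
For `d = 1` the orbits are `{0}` and the units.
-/

/-- The orbit equivalence relation, on `d`-tuples of pairwise distinct elements of
`ℤ/Nℤ`, induced by the coordinatewise multiplication action of `(ℤ/Nℤ)ˣ`. -/
def tupleOrbitRel (N d : ℕ) (n n' : {f : Fin d → ZMod N // Function.Injective f}) :
    Prop :=
  ∃ u : (ZMod N)ˣ, ∀ k, n'.1 k = (u : ZMod N) * n.1 k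

open MulAction

theorem MulAction.card_quotient_mul_card_of_isCancelSMul (G X : Type*) [Group G] [MulAction G X]
    [IsCancelSMul G X] :
    Nat.card (Quotient (orbitRel G X)) * Nat.card G = Nat.card X := by
  rw [← Nat.card_prod, ← Nat.card_congr (selfEquivOrbitsQuotientProd (G := G) (X := X)
    IsCancelSMul.stabilizer_eq_bot)]

namespace Function.Embedding

variable {ι K : Type*}

instance isCancelSMul_units [Nontrivial ι] [MonoidWithZero K] [IsRightCancelMulZero K] :
    IsCancelSMul Kˣ (ι ↪ K) := by
  refine isCancelSMul_iff_eq_one_of_smul_eq.mpr fun u f hu => ?_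
  obtain ⟨i, hi⟩ : ∃ i, f i ≠ 0 := by
    obtain ⟨i, j, hij⟩ := exists_pair_ne ι
    by_contra! h
    exact hij (f.injective ((h i).trans (h j).symm))
  exact Units.ext (mul_right_cancel₀ hi ((DFunLike.congr_fun hu i).trans (one_mul _).symm))

theorem card_quotient_orbitRel_units_of_unique [Unique ι] [GroupWithZero K] :
    Nat.card (Quotient (orbitRel Kˣ (ι ↪ K))) = 2 := by
  classical
  let isZero : Quotient (orbitRel Kˣ (ι ↪ K)) → Bool :=
    Quotient.lift (fun f => decide (f default = 0)) fun f g ⟨u, hu⟩ => by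
      simp [← hu, smul_apply, Units.smul_def]
  have : Function.Bijective isZero := by
    constructor
    · rintro ⟨f⟩ ⟨g⟩ h
      simp only [isZero, decide_eq_decide] at h
      obtain ⟨u, hu⟩ : ∃ u : Kˣ, u • g default = f default := by
        by_cases hf : f default = 0
        · exact ⟨1, by simp [hf, h.mp hf]⟩
        · have hg : g default ≠ 0 := mt h.mpr hf
          exact ⟨Units.mk0 (f default / g default) (div_ne_zero hf hg),
            by simp [Units.smul_def, hg]⟩
      exact Quotient.sound ⟨u, DFunLike.ext _ _ fun i => by
        rw [Unique.eq_default i, smul_apply, hu]⟩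
    · intro b
      cases b
      · exact ⟨⟦⟨fun _ => 1, Function.injective_of_subsingleton _⟩⟧, by simp [isZero]⟩
      · exact ⟨⟦⟨fun _ => 0, Function.injective_of_subsingleton _⟩⟧, by simp [isZero]⟩
  rw [Nat.card_congr (Equiv.ofBijective isZero this), Nat.card_eq_fintype_card, Fintype.card_bool]

end Function.Embedding

theorem Nat.descFactorial_eq_mul_mul_prod_Icc (n k : ℕ) (hk : 2 ≤ k) :
    n.descFactorial k = n * (n - 1) * ∏ j ∈ Finset.Icc 2 (k - 1), (n - j) := by
  have hIcc : Finset.Icc 2 (k - 1) = Finset.Ico 2 k := by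
    rw [← Finset.Ico_add_one_right_eq_Icc, Nat.sub_add_cancel (by omega)]
  rw [Nat.descFactorial_eq_prod_range, Finset.range_eq_Ico, hIcc,
    ← Finset.prod_Ico_consecutive _ (Nat.zero_le 2) hk, ← Finset.range_eq_Ico]
  simp [Finset.prod_range_succ]

noncomputable def tupleOrbitRelQuotEquiv (N d : ℕ) :
    Quot (tupleOrbitRel N d) ≃ Quotient (orbitRel (ZMod N)ˣ (Fin d ↪ ZMod N)) :=
  Quot.congr (Equiv.subtypeInjectiveEquivEmbedding _ _) fun n n' => by
    rw [Setoid.comm', orbitRel_apply]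
    exact exists_congr fun u => by
      rw [DFunLike.ext_iff]
      exact forall_congr' fun k => eq_comm

theorem card_tuple_orbits_general (N d : ℕ) (hN : N.Prime) :
    ((d = 1 ∨ (d = 2 ∧ N = 2)) →
        Nat.card (Quot (tupleOrbitRel N d)) = 2) ∧
    (2 ≤ d → 2 < N →
        Nat.card (Quot (tupleOrbitRel N d)) =
          N * ∏ j ∈ Finset.Icc 2 (d - 1), (N - j)) := by
  have := Fact.mk hN
  rw [Nat.card_congr (tupleOrbitRelQuotEquiv N d)]
  have card_of_two_le (hd : 2 ≤ d) :
      Nat.card (Quotient (orbitRel (ZMod N)ˣ (Fin d ↪ ZMod N))) =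
      N * ∏ j ∈ Finset.Icc 2 (d - 1), (N - j) := by
    have : Nontrivial (Fin d) := Fin.nontrivial_iff_two_le.mpr hd
    have hcount := card_quotient_mul_card_of_isCancelSMul (ZMod N)ˣ (Fin d ↪ ZMod N)
    rw [Nat.card_units, Nat.card_zmod, Nat.card_eq_fintype_card (α := Fin d ↪ _),
      Fintype.card_embedding_eq, Fintype.card_fin, ZMod.card,
      Nat.descFactorial_eq_mul_mul_prod_Icc N d hd] at hcount
    exact Nat.eq_of_mul_eq_mul_right (m := N - 1) (by have := hN.two_le; omega)
      (by rw [hcount]; ring)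
  refine ⟨?_, fun hd _ => card_of_two_le hd⟩
  rintro (rfl | ⟨rfl, rfl⟩)
  · exact Function.Embedding.card_quotient_orbitRel_units_of_unique
  · rw [card_of_two_le le_rfl]; rfl

/-- The number of orbits of the coordinatewise multiplication action of `(ℤ/Nℤ)ˣ`
on `d`-tuples of pairwise distinct elements of `ℤ/Nℤ`, for `N` prime:
it is `2` when `d = 1` or `d = N = 2`, and `N·(N−2)·(N−3)⋯(N−d+1)` when
`d ≥ 2` and `N > 2`. -/
theorem card_tuple_orbits (N d : ℕ) [NeZero N] (hN : N.Prime) (hd : 1 ≤ d)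
    (hdN : d ≤ N) :
    ((d = 1 ∨ (d = 2 ∧ N = 2)) →
        Nat.card (Quot (tupleOrbitRel N d)) = 2) ∧
    (2 ≤ d → 2 < N →
        Nat.card (Quot (tupleOrbitRel N d)) =
          N * ∏ j ∈ Finset.Icc 2 (d - 1), (N - j)) :=
  card_tuple_orbits_general N d hN
end

section
/- Let N be a prime and 1 < d < N. Then the number of orbits of the action of (ℤ/Nℤ)ˣ on the d-element subsets of ℤ/Nℤ equals α₁ + ∑_{c>1, c|d, c|N−1} α_c + ∑_{c>1, c|d−1, c|N−1} α_c, where the rational numbers α_c are defined by the backwards recursion given in the context. (By the one-to-one correspondence between such orbits and unitary-equivalence classes of DFT-FUNTFs, this is the exact number of inequivalent harmonic frames of N vectors for ℂ^d when N is prime.) -/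
/-!
By Burnside's lemma, `(N - 1)` times the number of orbits is `∑ᵤ |Fix u|`. A `d`-subset fixed
by a unit `u` of order `c` is a union of cosets of `⟨u⟩` in `(ℤ/Nℤ)ˣ`, plus possibly `0`, so
`|Fix u| = [c ∣ d] C((N-1)/c, d/c) + [c ∣ d-1] C((N-1)/c, (d-1)/c)`; as `(ℤ/Nℤ)ˣ` is cyclic,
exactly `φ c` units have order `c`.

Write `α_c(e) = alphaRec N e c`. Since `alphaLead N e c = c C((N-1)/c, e/c) / (N-1)`, the
recursion says that for every common divisor `c` of `e` and `N - 1`, `c = 1` included,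
`∑ ((N-1)/b) α_b(e) = C((N-1)/c, e/c)`, the sum running over the common divisors `b` that are
multiples of `c`. Summing against `φ c` and using `∑_{c ∣ b} φ c = b` turns the Burnside sum into
`(N - 1) ∑_c α_c(e)` over all common divisors `c`. Finally the paper's `α₁` is
`α_1(d) + α_1(d - 1)`, by Pascal's rule.
-/

open scoped BigOperators

/-- The orbit equivalence relation, on `d`-element subsets of `ℤ/Nℤ`, induced by the
multiplication action of `(ℤ/Nℤ)ˣ`: `u·S = {u·s : s ∈ S}`. -/
def subsetOrbitRel (N d : ℕ) (S S' : {s : Finset (ZMod N) // s.card = d}) : Prop :=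
  ∃ u : (ZMod N)ˣ, Finset.image (fun x => (u : ZMod N) * x) S.1 = S'.1

/-- The leading term `(N−1−c)(N−1−2c)⋯(N−1−(d/c−1)c) / (c^(d/c−1)·(d/c)!)` in the
backwards recursion defining `α_c`. -/
noncomputable def alphaLead (N d c : ℕ) : ℚ :=
  (∏ j ∈ Finset.Icc 1 (d / c - 1), ((N : ℚ) - 1 - (j : ℚ) * (c : ℚ))) /
    ((c : ℚ) ^ (d / c - 1) * (Nat.factorial (d / c) : ℚ))

/-- The numbers `α_c` (for `c > 1` with `c ∣ N−1` and `c ∣ d`), defined by the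
backwards recursion
`α_c = (N−1−c)⋯(N−1−(d/c−1)c)/(c^(d/c−1)(d/c)!) − (c/(N−1))·∑_b ((N−1)/b)·α_b`,
the sum being over `b` with `c < b < N`, `c ∣ b`, `b ∣ d` and `b ∣ N−1`.
(The numbers `α_c` for `c ∣ d−1` are obtained as `alphaRec N (d−1) c`.) -/
noncomputable def alphaRec (N d : ℕ) : ℕ → ℚ := fun c =>
  alphaLead N d c - ((c : ℚ) / ((N : ℚ) - 1)) *
    ∑ b ∈ ((Finset.Ioo c N).filter fun b => c ∣ b ∧ b ∣ d ∧ b ∣ (N - 1)).attach,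
      (((N : ℚ) - 1) / (b.1 : ℚ)) * alphaRec N d b.1
termination_by c => N - c
decreasing_by
  have hb := b.2
  simp only [Finset.mem_filter, Finset.mem_Ioo] at hb
  omega

/-- The number `α₁`, defined by
`α₁ = (1/(N−1))·C(N,d) − ∑_{c∣d, c>1, c∣N−1} α_c/c − ∑_{c∣d−1, c>1, c∣N−1} α_c/c`. -/
noncomputable def alphaOne (N d : ℕ) : ℚ :=
  (1 / ((N : ℚ) - 1)) * (Nat.choose N d : ℚ)
    - ∑ c ∈ (Finset.Ioo 1 N).filter (fun c => c ∣ d ∧ c ∣ (N - 1)),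
        alphaRec N d c / (c : ℚ)
    - ∑ c ∈ (Finset.Ioo 1 N).filter (fun c => c ∣ (d - 1) ∧ c ∣ (N - 1)),
        alphaRec N (d - 1) c / (c : ℚ)

open Finset
open scoped Pointwise

theorem card_filter_mul_card_eq {β : Type*} [Fintype β] {c : ℕ} (hc : 0 < c) (e : ℕ) :
    #{U : Finset β | c * #U = e} = if c ∣ e then (Fintype.card β).choose (e / c) else 0 := by
  split_ifs with h
  · obtain ⟨k, rfl⟩ := h
    simp only [Nat.mul_left_cancel_iff hc, Nat.mul_div_cancel_left k hc]
    rw [← Fintype.card_subtype, Fintype.card_finset_len]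
  · rw [card_eq_zero, filter_eq_empty_iff]
    exact fun U _ hU => h ⟨_, hU.symm⟩

theorem card_filter_mem_eq_mul {α β : Type*} [Fintype α] [DecidableEq β] {f : α → β} {c : ℕ}
    (hf : ∀ b, #{x | f x = b} = c) (U : Finset β) : #{x | f x ∈ U} = c * #U := by
  rw [card_eq_sum_card_fiberwise (s := {x | f x ∈ U}) (t := U) (fun x hx => (mem_filter.mp hx).2),
    sum_congr rfl fun b hb => ?_, sum_const_nat fun _ _ => rfl, mul_comm]
  rw [filter_filter, ← hf b]
  exact congrArg card (filter_congr fun x _ => and_iff_right_of_imp fun h => h ▸ hb)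

theorem card_filter_saturated {α β : Type*} [Fintype α] [DecidableEq α] [Fintype β]
    [DecidableEq β] {f : α → β} {c : ℕ} (hc : 0 < c) (hf : ∀ b, #{x | f x = b} = c) (e : ℕ) :
    #{S : Finset α | (∀ x ∈ S, ∀ y, f y = f x → y ∈ S) ∧ #S = e}
      = if c ∣ e then (Fintype.card β).choose (e / c) else 0 := by
  have hsurj : f.Surjective := fun b => by
    obtain ⟨x, hx⟩ := card_pos.mp (hf b ▸ hc : 0 < #{x | f x = b})
    exact ⟨x, (mem_filter.mp hx).2⟩
  have hinj : Function.Injective fun U : Finset β => ({x | f x ∈ U} : Finset α) := by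
    intro U V hUV
    ext b
    obtain ⟨x, rfl⟩ := hsurj b
    simpa using congr(x ∈ $hUV)
  rw [← card_filter_mul_card_eq hc, ← card_image_of_injective _ hinj]
  congr 1
  ext S
  simp only [mem_filter, mem_univ, true_and, mem_image]
  constructor
  · rintro ⟨hS, rfl⟩
    have hpre : ({x | f x ∈ S.image f} : Finset α) = S := by
      ext y
      simp only [mem_filter, mem_univ, true_and, mem_image]
      exact ⟨fun ⟨x, hx, hxy⟩ => hS x hx y hxy.symm, fun hy => ⟨y, hy, rfl⟩⟩
    refine ⟨S.image f, ?_, hpre⟩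
    rw [← card_filter_mem_eq_mul hf, hpre]
  · rintro ⟨U, hU, rfl⟩
    refine ⟨fun x hx y hxy => ?_, (card_filter_mem_eq_mul hf U).trans hU⟩
    simp only [mem_filter, mem_univ, true_and] at hx ⊢
    exact hxy ▸ hx

section CommGroup

variable {G : Type*} [CommGroup G] [DecidableEq G]

theorem smul_finset_eq_self_iff_saturated (u : G) (T : Finset G) :
    u • T = T ↔
      ∀ x ∈ T, ∀ y : G, (y : G ⧸ Subgroup.zpowers u) = (x : G ⧸ Subgroup.zpowers u) → y ∈ T := by
  constructor
  · intro hT x hx y hxy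
    have hstab : Subgroup.zpowers u ≤ MulAction.stabilizer G T :=
      Subgroup.zpowers_le.mpr (MulAction.mem_stabilizer_iff.mpr hT)
    have hmem : y * x⁻¹ ∈ Subgroup.zpowers u := by
      simpa [mul_comm] using QuotientGroup.eq.mp hxy.symm
    rw [← MulAction.mem_stabilizer_iff.mp (hstab hmem)]
    exact mem_smul_finset.mpr ⟨x, hx, by simp⟩
  · intro hT
    refine eq_of_subset_of_card_le (fun y hy => ?_) (card_smul_finset u T).ge
    obtain ⟨x, hx, rfl⟩ := mem_smul_finset.mp hy
    refine hT x hx _ (QuotientGroup.eq.mpr ?_)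
    simp

theorem card_filter_smul_eq_self [Fintype G] (u : G) (e : ℕ) :
    #{T : Finset G | u • T = T ∧ #T = e}
      = if orderOf u ∣ e then (Fintype.card G / orderOf u).choose (e / orderOf u) else 0 := by
  classical
  set H := Subgroup.zpowers u
  have hfib : ∀ q : G ⧸ H, #{x : G | (x : G ⧸ H) = q} = orderOf u := by
    intro q
    have := QuotientGroup.card_preimage_mk H {q}
    rw [Nat.card_unique (α := ({q} : Set (G ⧸ H))), mul_one] at this
    rw [← Nat.card_zpowers, ← this, ← Fintype.card_subtype, ← Nat.card_eq_fintype_card]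
    rfl
  have hcard : Fintype.card (G ⧸ H) = Fintype.card G / orderOf u := by
    rw [← Nat.card_eq_fintype_card, ← Nat.card_eq_fintype_card, ← H.index_mul_card,
      Nat.card_zpowers, Nat.mul_div_cancel _ (orderOf_pos u), Subgroup.index]
  simp_rw [smul_finset_eq_self_iff_saturated]
  rw [card_filter_saturated (orderOf_pos u) hfib, hcard]

end CommGroup

theorem smul_image_units_val {M : Type*} [Monoid M] [DecidableEq M] (u : Mˣ) (T : Finset Mˣ) :
    u • T.image Units.val = (u • T).image Units.val :=
  (image_smul_comm Units.val u T fun _ => rfl).symm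

theorem smul_insert_zero_eq_self_iff {M₀ : Type*} [MonoidWithZero M₀] [DecidableEq M₀] (u : M₀ˣ)
    {S : Finset M₀} (h0 : (0 : M₀) ∉ S) : u • insert 0 S = insert 0 S ↔ u • S = S := by
  have hu0 : (0 : M₀) ∉ u • S := by
    rwa [← smul_zero u, smul_mem_smul_finset_iff]
  rw [smul_finset_insert, smul_zero]
  refine ⟨fun h => ?_, fun h => by rw [h]⟩
  simpa [erase_insert hu0, erase_insert h0] using congrArg (erase · 0) h

theorem card_filter_smul_eq_self_zero_mem {M₀ : Type*} [MonoidWithZero M₀] [DecidableEq M₀]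
    [Fintype M₀] (u : M₀ˣ) (e : ℕ) :
    #{S : Finset M₀ | (u • S = S ∧ #S = e + 1) ∧ 0 ∈ S}
      = #{S : Finset M₀ | (u • S = S ∧ #S = e) ∧ 0 ∉ S} := by
  refine card_nbij' (fun S => S.erase 0) (insert 0) (fun S hS => ?_) (fun S hS => ?_)
    (fun S hS => insert_erase (mem_filter.mp hS).2.2)
    (fun S hS => erase_insert (mem_filter.mp hS).2.2)
  · simp only [coe_filter, mem_univ, true_and, Set.mem_ofPred_eq] at hS ⊢
    obtain ⟨⟨hS, hcard⟩, h0⟩ := hS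
    refine ⟨⟨?_, by rw [card_erase_of_mem h0, hcard, Nat.add_sub_cancel]⟩, notMem_erase 0 S⟩
    rwa [← smul_insert_zero_eq_self_iff u (notMem_erase 0 S), insert_erase h0]
  · simp only [coe_filter, mem_univ, true_and, Set.mem_ofPred_eq] at hS ⊢
    obtain ⟨⟨hS, hcard⟩, h0⟩ := hS
    exact ⟨⟨(smul_insert_zero_eq_self_iff u h0).mpr hS, by rw [card_insert_of_notMem h0, hcard]⟩,
      mem_insert_self 0 S⟩

section GroupWithZero

variable {G₀ : Type*} [GroupWithZero G₀] [DecidableEq G₀] [Fintype G₀]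

theorem card_filter_smul_eq_self_zero_notMem (u : G₀ˣ) (e : ℕ) :
    #{S : Finset G₀ | (u • S = S ∧ #S = e) ∧ 0 ∉ S} = #{T : Finset G₀ˣ | u • T = T ∧ #T = e} := by
  have hval := Units.val_injective (α := G₀)
  rw [← card_image_of_injective _ (image_injective hval)]
  congr 1
  ext S
  simp only [mem_filter, mem_univ, true_and, mem_image]
  constructor
  · rintro ⟨⟨hS, hcard⟩, h0⟩
    have hsub : S ⊆ univ.image Units.val := fun x hx =>
      mem_image.mpr ⟨Units.mk0 x (ne_of_mem_of_not_mem hx h0), mem_univ _, rfl⟩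
    obtain ⟨T, -, rfl⟩ := subset_image_iff.mp hsub
    refine ⟨T, ⟨?_, ?_⟩, rfl⟩
    · rwa [smul_image_units_val, (image_injective hval).eq_iff] at hS
    · rwa [card_image_of_injective _ hval] at hcard
  · rintro ⟨T, ⟨hT, hcard⟩, rfl⟩
    refine ⟨⟨by rw [smul_image_units_val, hT], by rw [card_image_of_injective _ hval, hcard]⟩, ?_⟩
    simp

theorem card_filter_smul_eq_self_succ (u : G₀ˣ) (e : ℕ) :
    #{S : Finset G₀ | u • S = S ∧ #S = e + 1}
      = #{T : Finset G₀ˣ | u • T = T ∧ #T = e + 1} + #{T : Finset G₀ˣ | u • T = T ∧ #T = e} := by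
  rw [← card_filter_add_card_filter_not (fun S => (0 : G₀) ∈ S), filter_filter, filter_filter,
    card_filter_smul_eq_self_zero_mem, card_filter_smul_eq_self_zero_notMem,
    card_filter_smul_eq_self_zero_notMem, add_comm]

end GroupWithZero

theorem card_orbits_powersetCard_mul_card {G X : Type*} [Group G] [Fintype G] [MulAction G X]
    [Fintype X] [DecidableEq X] (n : ℕ) :
    Nat.card (MulAction.orbitRel.Quotient G (Set.powersetCard X n)) * Fintype.card G
      = ∑ g : G, #{S : Finset X | g • S = S ∧ #S = n} := by
  classical
  let _ : ∀ g : G, Fintype (MulAction.fixedBy (Set.powersetCard X n) g) :=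
    fun _ => Fintype.ofFinite _
  let _ : Fintype (MulAction.orbitRel.Quotient G (Set.powersetCard X n)) := Fintype.ofFinite _
  rw [Nat.card_eq_fintype_card, ← MulAction.sum_card_fixedBy_eq_card_orbits_mul_card_group]
  refine sum_congr rfl fun g _ => ?_
  rw [← Fintype.card_subtype, ← Nat.card_eq_fintype_card, ← Nat.card_eq_fintype_card]
  refine Nat.card_congr (((Equiv.subtypeEquivRight fun S => ?_).trans
    (Equiv.subtypeSubtypeEquivSubtypeInter (· ∈ Set.powersetCard X n) (fun S => g • S = S))).trans
    (Equiv.subtypeEquivRight fun S => ?_))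
  · rw [MulAction.mem_fixedBy, Subtype.ext_iff, Set.powersetCard.coe_smul]
  · rw [Set.powersetCard.mem_iff, and_comm]

theorem IsCyclic.sum_comp_orderOf {G M : Type*} [Group G] [Fintype G] [IsCyclic G]
    [AddCommMonoid M] (f : ℕ → M) :
    ∑ x : G, f (orderOf x) = ∑ c ∈ (Fintype.card G).divisors, Nat.totient c • f c := by
  classical
  rw [← sum_fiberwise_of_maps_to (g := orderOf) (t := (Fintype.card G).divisors)
    fun x _ => Nat.mem_divisors.mpr ⟨orderOf_dvd_card, Fintype.card_ne_zero⟩]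
  refine sum_congr rfl fun c hc => ?_
  rw [sum_congr rfl fun x hx => congrArg f (mem_filter.mp hx).2, sum_const,
    IsCyclic.card_orderOf_eq_totient (Nat.dvd_of_mem_divisors hc)]

theorem card_orbits_powersetCard_units_mul (F : Type*) [Field F] [Fintype F] [DecidableEq F]
    (e : ℕ) :
    Nat.card (MulAction.orbitRel.Quotient Fˣ (Set.powersetCard F (e + 1)))
        * (Fintype.card F - 1)
      = ∑ c ∈ (Fintype.card F - 1).divisors, Nat.totient c *
          ((if c ∣ e + 1 then ((Fintype.card F - 1) / c).choose ((e + 1) / c) else 0)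
            + (if c ∣ e then ((Fintype.card F - 1) / c).choose (e / c) else 0)) := by
  rw [← Fintype.card_units, card_orbits_powersetCard_mul_card]
  simp_rw [card_filter_smul_eq_self_succ, card_filter_smul_eq_self]
  exact IsCyclic.sum_comp_orderOf fun c =>
    (if c ∣ e + 1 then (Fintype.card Fˣ / c).choose ((e + 1) / c) else 0)
      + (if c ∣ e then (Fintype.card Fˣ / c).choose (e / c) else 0)

theorem card_quot_subsetOrbitRel (N d : ℕ) :
    Nat.card (Quot (subsetOrbitRel N d))
      = Nat.card (MulAction.orbitRel.Quotient (ZMod N)ˣ (Set.powersetCard (ZMod N) d)) := by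
  refine Nat.card_congr (Quot.congr (Equiv.subtypeEquivRight fun _ =>
    Set.powersetCard.mem_iff.symm) fun S S' => ?_)
  rw [MulAction.orbitRel_apply, MulAction.mem_orbit_symm, MulAction.mem_orbit_iff, subsetOrbitRel]
  refine exists_congr fun u => ?_
  rw [Subtype.ext_iff, Set.powersetCard.coe_smul, smul_finset_def]
  rfl

theorem sum_divisors_totient_mul_sum_filter_dvd {R : Type*} [CommSemiring R] (n : ℕ)
    (w : ℕ → R) :
    ∑ c ∈ n.divisors, (Nat.totient c : R) * ∑ b ∈ n.divisors with c ∣ b, w b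
      = ∑ b ∈ n.divisors, (b : R) * w b := by
  simp_rw [mul_sum]
  rw [sum_comm' (t' := n.divisors) (s' := Nat.divisors) fun c b => ?_]
  · refine sum_congr rfl fun b _ => ?_
    rw [← sum_mul, ← Nat.cast_sum, Nat.sum_totient]
  · simp only [mem_filter, Nat.mem_divisors]
    constructor
    · rintro ⟨-, ⟨hbn, hn⟩, hcb⟩
      exact ⟨⟨hcb, ne_zero_of_dvd_ne_zero hn hbn⟩, hbn, hn⟩
    · rintro ⟨⟨hcb, -⟩, hbn, hn⟩
      exact ⟨⟨hcb.trans hbn, hn⟩, ⟨hbn, hn⟩, hcb⟩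

section Alpha

variable {N e : ℕ}

theorem cast_sub_one_ne_zero (hN : 2 ≤ N) : (N : ℚ) - 1 ≠ 0 := by
  rw [sub_ne_zero]
  exact_mod_cast (by omega : N ≠ 1)

theorem alphaLead_eq (hN : 2 ≤ N) (he : 0 < e) {c : ℕ} (hc : 0 < c) (hce : c ∣ e)
    (hcN : c ∣ N - 1) :
    alphaLead N e c = c * ((N - 1) / c).choose (e / c) / ((N : ℚ) - 1) := by
  obtain ⟨m, hm⟩ := hcN
  obtain ⟨k, rfl⟩ := hce
  obtain ⟨k, rfl⟩ : ∃ k', k = k' + 1 := ⟨k - 1, by have := Nat.pos_of_mul_pos_left he; omega⟩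
  have hm0 : (m : ℚ) ≠ 0 := Nat.cast_ne_zero.mpr (by rintro rfl; omega)
  have hNq : (N : ℚ) - 1 = c * m := by
    rw [← Nat.cast_one, ← Nat.cast_sub (by omega), hm, Nat.cast_mul]
  have hprod : ∏ j ∈ Icc 1 k, ((c : ℚ) * m - j * c) = c ^ k * ∏ j ∈ Icc 1 k, ((m : ℚ) - j) := by
    simp_rw [show ∀ j : ℕ, (c : ℚ) * m - j * c = c * (m - j) from fun j => by ring]
    rw [prod_mul_distrib, prod_const, Nat.card_Icc, Nat.add_sub_cancel]
  have hdesc : (m : ℚ) * ∏ j ∈ Icc 1 k, ((m : ℚ) - j) = (k + 1).factorial * m.choose (k + 1) := by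
    have := descPochhammer_eval_eq_prod_range (k + 1) (m : ℚ)
    rw [descPochhammer_eval_eq_descFactorial, Nat.descFactorial_eq_factorial_mul_choose,
      prod_range_eq_mul_Ico _ k.succ_pos, Nat.succ_eq_add_one, Ico_add_one_right_eq_Icc] at this
    simpa using this.symm
  rw [alphaLead, hm, Nat.mul_div_cancel_left _ hc, Nat.mul_div_cancel_left _ hc, hNq,
    Nat.add_sub_cancel, hprod]
  field_simp
  linear_combination hdesc

theorem alphaRec_eq (c : ℕ) :
    alphaRec N e c = alphaLead N e c - c / ((N : ℚ) - 1) *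
      ∑ b ∈ Ioo c N with c ∣ b ∧ b ∣ e ∧ b ∣ N - 1, ((N : ℚ) - 1) / b * alphaRec N e b := by
  rw [alphaRec, sum_attach _ fun b => ((N : ℚ) - 1) / b * alphaRec N e b]

theorem sum_filter_dvd_alphaRec (hN : 2 ≤ N) (he : 0 < e) {c : ℕ}
    (hc : c ∈ (e.gcd (N - 1)).divisors) :
    ∑ b ∈ (e.gcd (N - 1)).divisors with c ∣ b, ((N : ℚ) - 1) / b * alphaRec N e b
      = ((N - 1) / c).choose (e / c) := by
  have hg : e.gcd (N - 1) ≠ 0 := Nat.gcd_ne_zero_right (by omega)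
  simp only [Nat.mem_divisors, Nat.dvd_gcd_iff] at hc
  obtain ⟨⟨hce, hcN⟩, -⟩ := hc
  have hc0 : 0 < c := Nat.pos_of_dvd_of_pos hce he
  have hset : {b ∈ (e.gcd (N - 1)).divisors | c ∣ b}
      = insert c {b ∈ Ioo c N | c ∣ b ∧ b ∣ e ∧ b ∣ N - 1} := by
    ext b
    simp only [mem_filter, Nat.mem_divisors, Nat.dvd_gcd_iff, mem_insert, mem_Ioo]
    constructor
    · rintro ⟨⟨⟨hbe, hbN⟩, -⟩, hcb⟩
      have hbN' := Nat.le_of_dvd (by omega) hbN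
      rcases (Nat.le_of_dvd (Nat.pos_of_dvd_of_pos hbe he) hcb).eq_or_lt with rfl | hcb'
      · exact .inl rfl
      · exact .inr ⟨⟨hcb', by omega⟩, hcb, hbe, hbN⟩
    · rintro (rfl | ⟨-, hcb, hbe, hbN⟩)
      · exact ⟨⟨⟨hce, hcN⟩, hg⟩, dvd_rfl⟩
      · exact ⟨⟨⟨hbe, hbN⟩, hg⟩, hcb⟩
  have hQ := cast_sub_one_ne_zero hN
  rw [hset, sum_insert (by simp), alphaRec_eq, alphaLead_eq hN he hc0 hce hcN]
  field_simp
  ring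

theorem sum_totient_mul_choose_eq (hN : 2 ≤ N) (he : 0 < e) :
    ∑ c ∈ (N - 1).divisors,
        (Nat.totient c : ℚ) * (if c ∣ e then (((N - 1) / c).choose (e / c) : ℚ) else 0)
      = ((N : ℚ) - 1) * ∑ c ∈ (e.gcd (N - 1)).divisors, alphaRec N e c := by
  have hdiv : {c ∈ (N - 1).divisors | c ∣ e} = (e.gcd (N - 1)).divisors := by
    ext c
    simp only [mem_filter, Nat.mem_divisors, Nat.dvd_gcd_iff]
    have hN1 : N - 1 ≠ 0 := by omega
    have hg : e.gcd (N - 1) ≠ 0 := Nat.gcd_ne_zero_right hN1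
    tauto
  simp_rw [mul_ite, mul_zero]
  rw [← sum_filter, hdiv, sum_congr rfl fun c hc => by rw [← sum_filter_dvd_alphaRec hN he hc],
    sum_divisors_totient_mul_sum_filter_dvd, mul_sum]
  refine sum_congr rfl fun b hb => ?_
  have hb : (b : ℚ) ≠ 0 := Nat.cast_ne_zero.mpr (Nat.ne_of_gt (Nat.pos_of_mem_divisors hb))
  field_simp

theorem alphaRec_one_eq (hN : 2 ≤ N) (he : 0 < e) :
    alphaRec N e 1 = (N - 1).choose e / ((N : ℚ) - 1)
      - ∑ c ∈ Ioo 1 N with c ∣ e ∧ c ∣ N - 1, alphaRec N e c / c := by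
  have hQ := cast_sub_one_ne_zero hN
  rw [alphaRec_eq, alphaLead_eq hN he one_pos (one_dvd e) (one_dvd _), Nat.div_one, Nat.div_one,
    Nat.cast_one, one_mul, mul_sum]
  simp only [one_dvd, true_and]
  refine congrArg _ (sum_congr rfl fun c hc => ?_)
  have hc : (c : ℚ) ≠ 0 := Nat.cast_ne_zero.mpr (by grind)
  field_simp

theorem alphaOne_eq (hN : 2 ≤ N) {d : ℕ} (hd : 1 < d) :
    alphaOne N d = alphaRec N d 1 + alphaRec N (d - 1) 1 := by
  rw [alphaOne, alphaRec_one_eq hN (by omega), alphaRec_one_eq hN (by omega)]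
  obtain ⟨n, rfl⟩ : ∃ n, N = n + 1 := ⟨N - 1, by omega⟩
  obtain ⟨k, rfl⟩ : ∃ k, d = k + 1 := ⟨d - 1, by omega⟩
  simp only [Nat.add_sub_cancel, Nat.choose_succ_succ', Nat.cast_add]
  ring

theorem sum_divisors_gcd_alphaRec (hN : 2 ≤ N) :
    ∑ c ∈ (e.gcd (N - 1)).divisors, alphaRec N e c
      = alphaRec N e 1 + ∑ c ∈ Ioo 1 N with c ∣ e ∧ c ∣ N - 1, alphaRec N e c := by
  have hg : e.gcd (N - 1) ≠ 0 := Nat.gcd_ne_zero_right (by omega)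
  have hset : {c ∈ Ioo 1 N | c ∣ e ∧ c ∣ N - 1} = (e.gcd (N - 1)).divisors.erase 1 := by
    ext c
    simp only [mem_filter, mem_Ioo, mem_erase, Nat.mem_divisors, Nat.dvd_gcd_iff]
    constructor
    · rintro ⟨⟨hc1, -⟩, hce, hcN⟩
      exact ⟨by omega, ⟨hce, hcN⟩, hg⟩
    · rintro ⟨hc1, ⟨hce, hcN⟩, -⟩
      have := Nat.le_of_dvd (by omega) hcN
      have := Nat.pos_of_dvd_of_pos hcN (by omega)
      exact ⟨⟨by omega, by omega⟩, hce, hcN⟩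
  rw [hset, add_sum_erase _ _ (Nat.one_mem_divisors.mpr hg)]

end Alpha

theorem card_subset_orbits_eq_alpha_sum_general (N d : ℕ) (hN : N.Prime)
    (hd1 : 1 < d) :
    (Nat.card (Quot (subsetOrbitRel N d)) : ℚ) =
      alphaOne N d
        + ∑ c ∈ (Finset.Ioo 1 N).filter (fun c => c ∣ d ∧ c ∣ (N - 1)),
            alphaRec N d c
        + ∑ c ∈ (Finset.Ioo 1 N).filter (fun c => c ∣ (d - 1) ∧ c ∣ (N - 1)),
            alphaRec N (d - 1) c := by
  have : Fact N.Prime := ⟨hN⟩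
  have hN2 := hN.two_le
  have hcount := card_orbits_powersetCard_units_mul (ZMod N) (d - 1)
  rw [Nat.sub_add_cancel hd1.le, ZMod.card, ← card_quot_subsetOrbitRel] at hcount
  have hcountQ := congrArg (Nat.cast : ℕ → ℚ) hcount
  push_cast [Nat.cast_sub hN.one_le] at hcountQ
  refine mul_right_cancel₀ (cast_sub_one_ne_zero hN2) (hcountQ.trans ?_)
  simp_rw [mul_add]
  rw [sum_add_distrib, sum_totient_mul_choose_eq hN2 (by omega),
    sum_totient_mul_choose_eq hN2 (by omega), sum_divisors_gcd_alphaRec hN2,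
    sum_divisors_gcd_alphaRec hN2, alphaOne_eq hN2 hd1]
  ring

/-- Exact enumeration of the inequivalent harmonic frames of prime order: for `N`
prime and `1 < d < N`, the number of orbits of the action of `(ℤ/Nℤ)ˣ` on the
`d`-element subsets of `ℤ/Nℤ` — which equals the number of inequivalent harmonic
frames of `N` vectors for `ℂ^d` — is `α₁ + ∑_{c>1, c∣d, c∣N−1} α_c +
∑_{c>1, c∣d−1, c∣N−1} α_c`. -/
theorem card_subset_orbits_eq_alpha_sum (N d : ℕ) [NeZero N] (hN : N.Prime)
    (hd1 : 1 < d) (hdN : d < N) :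
    (Nat.card (Quot (subsetOrbitRel N d)) : ℚ) =
      alphaOne N d
        + ∑ c ∈ (Finset.Ioo 1 N).filter (fun c => c ∣ d ∧ c ∣ (N - 1)),
            alphaRec N d c
        + ∑ c ∈ (Finset.Ioo 1 N).filter (fun c => c ∣ (d - 1) ∧ c ∣ (N - 1)),
            alphaRec N (d - 1) c :=
  card_subset_orbits_eq_alpha_sum_general N d hN hd1
end

section
/- For every integer d ≥ 2 there exists a constant C > 0 such that for every prime N > d, the number of orbits of the action of (ℤ/Nℤ)ˣ on the d-element subsets of ℤ/Nℤ is at most C·N^{d−1}. (Equivalently, the number of inequivalent harmonic frames of N vectors for ℂ^d, N prime, is O(N^{d−1}).) -/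
open scoped BigOperators

/-- For every `d ≥ 2` there is a constant `C > 0` such that for every prime `N > d`
the number of orbits of `(ℤ/Nℤ)ˣ` acting on `d`-element subsets of `ℤ/Nℤ` (i.e. the
number of inequivalent harmonic frames of `N` vectors for `ℂ^d`) is at most
`C·N^(d−1)`. -/
theorem card_subset_orbits_bigO (d : ℕ) (hd : 2 ≤ d) :
    ∃ C : ℝ, 0 < C ∧ ∀ N : ℕ, N.Prime → d < N →
      (Nat.card (Quot (subsetOrbitRel N d)) : ℝ) ≤ C * (N : ℝ) ^ (d - 1) := by
  refine ⟨1, one_pos, fun N hN hdN => ?_⟩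
  haveI : Fact N.Prime := ⟨hN⟩
  -- the type of d-subsets containing 1
  let A := {S : Finset (ZMod N) // S.card = d ∧ (1 : ZMod N) ∈ S}
  have hsurj : Function.Surjective
      (fun S : A => Quot.mk (subsetOrbitRel N d) ⟨S.1, S.2.1⟩) := by
    intro q
    induction q using Quot.ind with
    | _ S =>
      obtain ⟨S, hS⟩ := S
      -- S has a nonzero element
      have hne : ∃ s ∈ S, s ≠ 0 := by
        by_contra h
        push_neg at h
        have : S ⊆ {0} := fun x hx => Finset.mem_singleton.2 (h x hx)
        have := Finset.card_le_card this
        simp [hS] at this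
        omega
      obtain ⟨s, hsS, hs0⟩ := hne
      have hs : IsUnit s := isUnit_iff_ne_zero.2 hs0
      let T := Finset.image (fun x => s⁻¹ * x) S
      have hTcard : T.card = d := by
        rw [Finset.card_image_of_injective _ (mul_right_injective₀ (inv_ne_zero hs0)), hS]
      have h1T : (1 : ZMod N) ∈ T := by
        refine Finset.mem_image.2 ⟨s, hsS, ?_⟩
        exact inv_mul_cancel₀ hs0
      refine ⟨⟨T, hTcard, h1T⟩, ?_⟩
      refine Quot.sound ⟨Units.mk0 s hs0, ?_⟩
      simp only [T, Finset.image_image, Units.val_mk0]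
      have : ((fun x => s * x) ∘ fun x => s⁻¹ * x) = id := by
        funext x
        simp [← mul_assoc, mul_inv_cancel₀ hs0]
      rw [this, Finset.image_id]
  have hA : Nat.card A ≤ N ^ (d - 1) := by
    have hinj : Function.Injective
        (fun S : A => (⟨S.1.erase 1, by
          rw [Finset.card_erase_of_mem S.2.2, S.2.1]⟩ :
          {T : Finset (ZMod N) // T.card = d - 1})) := by
      intro S S' h
      simp only [Subtype.mk.injEq] at h
      have : S.1 = S'.1 := by
        rw [← Finset.insert_erase S.2.2, ← Finset.insert_erase S'.2.2, h]
      exact Subtype.ext this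
    calc Nat.card A ≤ Nat.card {T : Finset (ZMod N) // T.card = d - 1} :=
          Nat.card_le_card_of_injective _ hinj
      _ = (Fintype.card (ZMod N)).choose (d - 1) := by
          rw [Nat.card_eq_fintype_card, Fintype.card_finset_len]
      _ = N.choose (d - 1) := by rw [ZMod.card]
      _ ≤ N ^ (d - 1) := Nat.choose_le_pow N (d - 1)
  have := Nat.card_le_card_of_surjective _ hsurj
  have hle : Nat.card (Quot (subsetOrbitRel N d)) ≤ N ^ (d - 1) := this.trans hA
  rw [one_mul]
  calc (Nat.card (Quot (subsetOrbitRel N d)) : ℝ) ≤ ((N ^ (d - 1) : ℕ) : ℝ) := by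
        exact_mod_cast hle
    _ = (N : ℝ) ^ (d - 1) := by push_cast; ring
end

section
/- Let N be a prime with N > 3 and N ≡ 1 (mod 3). Then the number of orbits of the action of (ℤ/Nℤ)ˣ on the 3-element subsets of ℤ/Nℤ equals (N² − 2N + 7)/6. -/
open scoped BigOperators

open Pointwise MulAction Finset

namespace ThreeOrbitsAux

variable {N : ℕ}

abbrev B (N : ℕ) := {s : Finset (ZMod N) // s.card = 3}

instance (N : ℕ) : MulAction (ZMod N)ˣ (B N) where
  smul u S := ⟨u • S.1, by rw [Finset.card_smul_finset]; exact S.2⟩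
  one_smul S := Subtype.ext (one_smul _ S.1)
  mul_smul u v S := Subtype.ext (mul_smul u v S.1)

lemma smul_val (u : (ZMod N)ˣ) (S : B N) :
    (u • S).1 = Finset.image (fun x => (u : ZMod N) * x) S.1 := by
  show u • S.1 = _
  rw [Finset.smul_finset_def]
  simp only [Units.smul_def, smul_eq_mul]

lemma rel_iff (S S' : B N) :
    subsetOrbitRel N 3 S S' ↔ Setoid.r (α := B N) (self := orbitRel (ZMod N)ˣ (B N)) S S' := by
  have h : ∀ u : (ZMod N)ˣ, ∀ T T' : B N, u • T = T' ↔
      Finset.image (fun x => (u : ZMod N) * x) T.1 = T'.1 := by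
    intro u T T'
    rw [Subtype.ext_iff, smul_val]
  constructor
  · rintro ⟨u, hu⟩
    refine ⟨u⁻¹, ?_⟩
    show u⁻¹ • S' = S
    rw [← (h u S S').mpr hu, inv_smul_smul]
  · rintro ⟨u, hu⟩
    replace hu : u • S' = S := hu
    exact ⟨u⁻¹, (h u⁻¹ S S').mp (by rw [← hu, inv_smul_smul])⟩

end ThreeOrbitsAux


namespace ThreeOrbitsAux
variable {N : ℕ} [Fact N.Prime] [NeZero N]

lemma two_ne (hN3 : 3 < N) : (2 : ZMod N) ≠ 0 := by
  intro h
  have h2 : ((2 : ℕ) : ZMod N) = 0 := by exact_mod_cast h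
  rw [ZMod.natCast_eq_zero_iff] at h2
  have := Nat.le_of_dvd (by norm_num) h2
  omega

lemma neg_self_ne (hN3 : 3 < N) {a : ZMod N} (ha : a ≠ 0) : -a ≠ a := by
  intro h
  have h2 : (2 : ZMod N) * a = 0 := by linear_combination -h
  rcases mul_eq_zero.mp h2 with h' | h'
  · exact two_ne hN3 h'
  · exact ha h'

lemma eq_one_of_mul_eq {v a : ZMod N} (ha : a ≠ 0) (h : v * a = a) : v = 1 :=
  mul_right_cancel₀ ha (by rw [h, one_mul])

/-- classification of 3-sets closed under mult by `v`, containing 0 -/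
lemma lemA {v : ZMod N} (hv0 : v ≠ 0) (hv1 : v ≠ 1) {s : Finset (ZMod N)}
    (h3 : s.card = 3) (hf : ∀ x ∈ s, v * x ∈ s) (h0 : (0 : ZMod N) ∈ s) :
    v ^ 2 = 1 ∧ ∃ a, a ≠ 0 ∧ s = {0, a, v * a} := by
  have ht : (s.erase 0).card = 2 := by rw [Finset.card_erase_of_mem h0, h3]
  obtain ⟨a, b, hab, ht2⟩ := Finset.card_eq_two.mp ht
  have ha : a ∈ s.erase 0 := by rw [ht2]; simp
  have hb : b ∈ s.erase 0 := by rw [ht2]; simp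
  have ha0 : a ≠ 0 := (Finset.mem_erase.mp ha).1
  have hb0 : b ≠ 0 := (Finset.mem_erase.mp hb).1
  have has : a ∈ s := (Finset.mem_erase.mp ha).2
  have hbs : b ∈ s := (Finset.mem_erase.mp hb).2
  have hclosed : ∀ x ∈ s.erase 0, v * x ∈ s.erase 0 := by
    intro x hx
    rw [Finset.mem_erase] at hx ⊢
    exact ⟨mul_ne_zero hv0 hx.1, hf x hx.2⟩
  have hva : v * a ∈ s.erase 0 := hclosed a ha
  rw [ht2, Finset.mem_insert, Finset.mem_singleton] at hva
  rcases hva with hva | hva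
  · exact absurd (eq_one_of_mul_eq ha0 hva) hv1
  have hvb : v * b ∈ s.erase 0 := hclosed b hb
  rw [ht2, Finset.mem_insert, Finset.mem_singleton] at hvb
  rcases hvb with hvb | hvb
  · have hsq : v ^ 2 * a = a := by rw [pow_two, mul_assoc, hva, hvb]
    refine ⟨eq_one_of_mul_eq ha0 hsq, a, ha0, ?_⟩
    rw [hva, ← ht2, Finset.insert_erase h0]
  · exact absurd (eq_one_of_mul_eq hb0 hvb) hv1

/-- classification of 3-sets closed under mult by `v`, not containing 0 -/
lemma lemB {v : ZMod N} (hv0 : v ≠ 0) (hv1 : v ≠ 1) (hv2 : v ^ 2 ≠ 1) {s : Finset (ZMod N)}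
    (h3 : s.card = 3) (hf : ∀ x ∈ s, v * x ∈ s) (h0 : (0 : ZMod N) ∉ s) :
    v ^ 3 = 1 ∧ ∃ b, b ≠ 0 ∧ s = {b, v * b, v ^ 2 * b} := by
  obtain ⟨b, hbs⟩ := Finset.card_pos.mp (by rw [h3]; norm_num)
  have hb0 : b ≠ 0 := fun h => h0 (h ▸ hbs)
  have h1 : v * b ∈ s := hf b hbs
  have h2 : v ^ 2 * b ∈ s := by
    have := hf _ h1
    rwa [← mul_assoc, ← pow_two] at this
  have d1 : b ≠ v * b := fun h => hv1 (eq_one_of_mul_eq hb0 h.symm)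
  have d2 : b ≠ v ^ 2 * b := fun h => hv2 (eq_one_of_mul_eq hb0 h.symm)
  have d3 : v * b ≠ v ^ 2 * b := by
    intro h
    have : v ^ 2 = v := mul_right_cancel₀ hb0 h.symm
    exact hv1 (mul_left_cancel₀ hv0 (by rw [mul_one, ← pow_two, this]))
  have hsub : ({b, v * b, v ^ 2 * b} : Finset (ZMod N)) ⊆ s := by
    intro x hx
    simp only [Finset.mem_insert, Finset.mem_singleton] at hx
    rcases hx with rfl | rfl | rfl <;> assumption
  have hcard : ({b, v * b, v ^ 2 * b} : Finset (ZMod N)).card = 3 := by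
    rw [Finset.card_insert_of_notMem (by simp [d1, d2]),
      Finset.card_pair d3]
  have hs : s = {b, v * b, v ^ 2 * b} :=
    (Finset.eq_of_subset_of_card_le hsub (by omega)).symm
  have h3b : v ^ 3 * b ∈ s := by
    have := hf _ h2
    rwa [← mul_assoc, show v * v ^ 2 = v ^ 3 by ring] at this
  rw [hs, Finset.mem_insert, Finset.mem_insert, Finset.mem_singleton] at h3b
  rcases h3b with h | h | h
  · exact ⟨eq_one_of_mul_eq hb0 h, b, hb0, hs⟩
  · exfalso
    have : v ^ 3 = v := mul_right_cancel₀ hb0 h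
    exact hv2 (mul_left_cancel₀ hv0 (by rw [mul_one, show v * v ^ 2 = v ^ 3 by ring, this]))
  · exfalso
    have : v ^ 3 = v ^ 2 := mul_right_cancel₀ hb0 h
    exact hv1 (mul_left_cancel₀ (pow_ne_zero 2 hv0) (by rw [mul_one, show v ^ 2 * v = v ^ 3 by ring, this, pow_two]; ))



end ThreeOrbitsAux

namespace ThreeOrbitsAux
variable {N : ℕ} [Fact N.Prime] [NeZero N]

lemma classify_neg (hN3 : 3 < N) {s : Finset (ZMod N)} (h3 : s.card = 3)
    (hf : ∀ x ∈ s, -x ∈ s) : ∃ a, a ≠ 0 ∧ s = {0, a, -a} := by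
  have key : ∀ w : ZMod N, -w = w → w = 0 := by
    intro w hw
    have h2 : (2 : ZMod N) * w = 0 := by linear_combination -hw
    rcases mul_eq_zero.mp h2 with h' | h'
    · exact absurd h' (two_ne hN3)
    · exact h'
  obtain ⟨x, y, z, hxy, hxz, hyz, hS⟩ := Finset.card_eq_three.mp h3
  subst hS
  have hx := hf x (by simp)
  have hy := hf y (by simp)
  have hz := hf z (by simp)
  simp only [Finset.mem_insert, Finset.mem_singleton] at hx hy hz
  rcases hx with hx | hx | hx
  · -- -x = x so x = 0
    have hx0 : x = 0 := key x hx
    subst hx0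
    rcases hy with hy | hy | hy
    · exact absurd (neg_eq_zero.mp hy) (Ne.symm hxy)
    · exact absurd (key y hy) (Ne.symm hxy)
    · exact ⟨y, Ne.symm hxy, by rw [← hy]⟩
  · -- -x = y
    rcases hz with hz | hz | hz
    · exact absurd (show z = y by linear_combination -hz + hx) (Ne.symm hyz)
    · exact absurd (show z = x by linear_combination -hz + hx) (Ne.symm hxz)
    · have hz0 : z = 0 := key z hz
      subst hz0
      refine ⟨x, hxz, ?_⟩
      rw [← hx]
      ext w
      simp only [Finset.mem_insert, Finset.mem_singleton]
      tauto
  · -- -x = z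
    rcases hy with hy | hy | hy
    · exact absurd (show y = z by linear_combination -hy + hx) hyz
    · have hy0 : y = 0 := key y hy
      subst hy0
      refine ⟨x, hxy, ?_⟩
      rw [← hx]
      ext w
      simp only [Finset.mem_insert, Finset.mem_singleton]
      tauto
    · exact absurd (neg_injective (hy.trans hx.symm)) (Ne.symm hxy)

end ThreeOrbitsAux

namespace ThreeOrbitsAux
variable {N : ℕ} [Fact N.Prime] [NeZero N]

lemma card3_neg (hN3 : 3 < N) {a : ZMod N} (ha : a ≠ 0) :
    ({0, a, -a} : Finset (ZMod N)).card = 3 := by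
  have h1 : (0 : ZMod N) ∉ ({a, -a} : Finset (ZMod N)) := by
    simp only [Finset.mem_insert, Finset.mem_singleton]
    push_neg
    exact ⟨Ne.symm ha, fun h => ha (neg_eq_zero.mp h.symm)⟩
  rw [Finset.card_insert_of_notMem h1, Finset.card_pair (Ne.symm (neg_self_ne hN3 ha))]

lemma count_two (hN3 : 3 < N) {v : ZMod N} (hv1 : v ≠ 1) (hv2 : v ^ 2 = 1) :
    2 * ((Finset.univ.filter
      (fun s : Finset (ZMod N) => s.card = 3 ∧ Finset.image (fun x => v * x) s = s)).card)
      = N - 1 := by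
  classical
  have hveq : v = -1 := by
    have h0 : (v - 1) * (v + 1) = 0 := by linear_combination hv2
    rcases mul_eq_zero.mp h0 with h | h
    · exact absurd (sub_eq_zero.mp h) hv1
    · linear_combination h
  subst hveq
  set T := Finset.univ.filter
      (fun s : Finset (ZMod N) => s.card = 3 ∧ Finset.image (fun x => (-1 : ZMod N) * x) s = s)
    with hT
  have hclosed : ∀ s ∈ T, ∀ x ∈ s, -x ∈ s := by
    intro s hs x hx
    rw [hT, Finset.mem_filter] at hs
    have := hs.2.2 ▸ Finset.mem_image_of_mem (fun x => (-1 : ZMod N) * x) hx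
    simpa using this
  have hcard3 : ∀ s ∈ T, s.card = 3 := by
    intro s hs; rw [hT, Finset.mem_filter] at hs; exact hs.2.1
  have hA : ((Finset.univ : Finset (ZMod N)).erase 0).card = N - 1 := by
    rw [Finset.card_erase_of_mem (Finset.mem_univ _), Finset.card_univ, ZMod.card]
  have hmaps : ∀ a ∈ (Finset.univ : Finset (ZMod N)).erase 0,
      ({0, a, -a} : Finset (ZMod N)) ∈ T := by
    intro a ha
    have ha0 : a ≠ 0 := (Finset.mem_erase.mp ha).1
    rw [hT, Finset.mem_filter]
    refine ⟨Finset.mem_univ _, card3_neg hN3 ha0, ?_⟩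
    ext w
    simp only [Finset.mem_image, Finset.mem_insert, Finset.mem_singleton]
    constructor
    · rintro ⟨x, (rfl | rfl | rfl), rfl⟩ <;> simp
    · intro hw
      rcases hw with hw | hw | hw
      · exact ⟨0, Or.inl rfl, by simp [hw]⟩
      · exact ⟨-a, Or.inr (Or.inr rfl), by simp [hw]⟩
      · exact ⟨a, Or.inr (Or.inl rfl), by simp [hw]⟩
  rw [Finset.card_eq_sum_card_fiberwise hmaps] at hA
  have hfib : ∀ S ∈ T,
      (((Finset.univ : Finset (ZMod N)).erase 0).filter
        (fun a => ({0, a, -a} : Finset (ZMod N)) = S)).card = 2 := by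
    intro S hS
    obtain ⟨b, hb0, hSb⟩ := classify_neg hN3 (hcard3 S hS) (hclosed S hS)
    have : ((Finset.univ : Finset (ZMod N)).erase 0).filter
        (fun a => ({0, a, -a} : Finset (ZMod N)) = S) = {b, -b} := by
      ext a
      simp only [Finset.mem_filter, Finset.mem_erase, Finset.mem_univ, true_and,
        Finset.mem_insert, Finset.mem_singleton, and_true, hSb]
      constructor
      · rintro ⟨ha0, heq⟩
        have : a ∈ ({0, b, -b} : Finset (ZMod N)) := by
          rw [← heq]; simp
        simp only [Finset.mem_insert, Finset.mem_singleton] at this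
        rcases this with rfl | rfl | rfl
        · exact absurd rfl ha0
        · left; rfl
        · right; rfl
      · rintro (rfl | rfl)
        · exact ⟨hb0, rfl⟩
        · refine ⟨neg_ne_zero.mpr hb0, ?_⟩
          ext w
          simp only [Finset.mem_insert, Finset.mem_singleton, neg_neg]
          tauto
    rw [this, Finset.card_pair (Ne.symm (neg_self_ne hN3 hb0))]
  rw [Finset.sum_congr rfl hfib, Finset.sum_const, smul_eq_mul, mul_comm] at hA
  omega

end ThreeOrbitsAux

namespace ThreeOrbitsAux
variable {N : ℕ} [Fact N.Prime] [NeZero N]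

lemma closed_of_mem {v : ZMod N} {s : Finset (ZMod N)}
    (h : Finset.image (fun x => v * x) s = s) : ∀ x ∈ s, v * x ∈ s := fun x hx =>
  h ▸ Finset.mem_image_of_mem (fun x => v * x) hx

lemma count_three (hN3 : 3 < N) {v : ZMod N} (hv1 : v ≠ 1) (hv3 : v ^ 3 = 1) :
    3 * ((Finset.univ.filter
      (fun s : Finset (ZMod N) => s.card = 3 ∧ Finset.image (fun x => v * x) s = s)).card)
      = N - 1 := by
  classical
  have hv0 : v ≠ 0 := by
    intro h; rw [h] at hv3; simp at hv3
  have hv2 : v ^ 2 ≠ 1 := by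
    intro h
    apply hv1
    calc v = v ^ 2 * v := by rw [h, one_mul]
      _ = v ^ 3 := by ring
      _ = 1 := hv3
  set T := Finset.univ.filter
      (fun s : Finset (ZMod N) => s.card = 3 ∧ Finset.image (fun x => v * x) s = s) with hT
  have hclassify : ∀ S ∈ T, ∃ b, b ≠ 0 ∧ S = {b, v * b, v ^ 2 * b} := by
    intro S hS
    rw [hT, Finset.mem_filter] at hS
    have hcl := closed_of_mem hS.2.2
    by_cases h0 : (0 : ZMod N) ∈ S
    · exact absurd (lemA hv0 hv1 hS.2.1 hcl h0).1 hv2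
    · exact (lemB hv0 hv1 hv2 hS.2.1 hcl h0).2
  have hA : ((Finset.univ : Finset (ZMod N)).erase 0).card = N - 1 := by
    rw [Finset.card_erase_of_mem (Finset.mem_univ _), Finset.card_univ, ZMod.card]
  have hcard3f : ∀ a : ZMod N, a ≠ 0 → ({a, v * a, v ^ 2 * a} : Finset (ZMod N)).card = 3 := by
    intro a ha0
    have d1 : a ≠ v * a := fun h => hv1 (eq_one_of_mul_eq ha0 h.symm)
    have d2 : a ≠ v ^ 2 * a := fun h => hv2 (eq_one_of_mul_eq ha0 h.symm)
    have d3 : v * a ≠ v ^ 2 * a := by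
      intro h
      have h2 : v ^ 2 = v := mul_right_cancel₀ ha0 h.symm
      exact hv1 (mul_left_cancel₀ hv0 (by rw [mul_one, ← pow_two, h2]))
    rw [Finset.card_insert_of_notMem (by simp [d1, d2]), Finset.card_pair d3]
  have hsetfix : ∀ a : ZMod N,
      ({v * a, v ^ 2 * a, a} : Finset (ZMod N)) = {a, v * a, v ^ 2 * a} := by
    intro a
    ext w
    simp only [Finset.mem_insert, Finset.mem_singleton]
    tauto
  have hva3 : ∀ a : ZMod N, v * (v ^ 2 * a) = a := by
    intro a
    rw [← mul_assoc, show v * v ^ 2 = v ^ 3 by ring, hv3, one_mul]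
  have hmaps : ∀ a ∈ (Finset.univ : Finset (ZMod N)).erase 0,
      ({a, v * a, v ^ 2 * a} : Finset (ZMod N)) ∈ T := by
    intro a ha
    have ha0 : a ≠ 0 := (Finset.mem_erase.mp ha).1
    rw [hT, Finset.mem_filter]
    refine ⟨Finset.mem_univ _, hcard3f a ha0, ?_⟩
    ext w
    simp only [Finset.mem_image, Finset.mem_insert, Finset.mem_singleton]
    constructor
    · rintro ⟨x, (rfl | rfl | rfl), rfl⟩
      · right; left; rfl
      · right; right; rw [← mul_assoc, ← pow_two]
      · left; rw [hva3]
    · intro hw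
      rcases hw with hw | hw | hw
      · exact ⟨v ^ 2 * a, Or.inr (Or.inr rfl), by rw [hva3, hw]⟩
      · exact ⟨a, Or.inl rfl, hw.symm⟩
      · exact ⟨v * a, Or.inr (Or.inl rfl), by rw [← mul_assoc, ← pow_two, hw]⟩
  rw [Finset.card_eq_sum_card_fiberwise hmaps] at hA
  have hfib : ∀ S ∈ T,
      (((Finset.univ : Finset (ZMod N)).erase 0).filter
        (fun a => ({a, v * a, v ^ 2 * a} : Finset (ZMod N)) = S)).card = 3 := by
    intro S hS
    obtain ⟨b, hb0, hSb⟩ := hclassify S hS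
    have hbT : ∀ x ∈ S, x ≠ 0 := by
      intro x hx
      rw [hSb, Finset.mem_insert, Finset.mem_insert, Finset.mem_singleton] at hx
      rcases hx with rfl | rfl | rfl
      · exact hb0
      · exact mul_ne_zero hv0 hb0
      · exact mul_ne_zero (pow_ne_zero 2 hv0) hb0
    have heqf : ((Finset.univ : Finset (ZMod N)).erase 0).filter
        (fun a => ({a, v * a, v ^ 2 * a} : Finset (ZMod N)) = S) = S := by
      ext a
      simp only [Finset.mem_filter, Finset.mem_erase, Finset.mem_univ, true_and, and_true]
      constructor
      · rintro ⟨ha0, heq⟩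
        rw [← heq]
        simp
      · intro haS
        refine ⟨hbT a haS, ?_⟩
        rw [hSb] at haS
        rw [Finset.mem_insert, Finset.mem_insert, Finset.mem_singleton] at haS
        rcases haS with rfl | rfl | rfl
        · exact hSb.symm
        · rw [hSb]
          have e1 : v * (v * b) = v ^ 2 * b := by ring
          have e2 : v ^ 2 * (v * b) = b := by
            rw [show v ^ 2 * (v * b) = v ^ 3 * b by ring, hv3, one_mul]
          rw [e1, e2]
          ext w
          simp only [Finset.mem_insert, Finset.mem_singleton]
          tauto
        · rw [hSb]
          have e1 : v * (v ^ 2 * b) = b := hva3 b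
          have e2 : v ^ 2 * (v ^ 2 * b) = v * b := by
            rw [show v ^ 2 * (v ^ 2 * b) = v ^ 3 * (v * b) by ring, hv3, one_mul]
          rw [e1, e2]
          ext w
          simp only [Finset.mem_insert, Finset.mem_singleton]
          tauto
    rw [heqf]
    rw [hT, Finset.mem_filter] at hS
    exact hS.2.1
  rw [Finset.sum_congr rfl hfib, Finset.sum_const, smul_eq_mul, mul_comm] at hA
  omega

lemma count_zero {v : ZMod N} (hv0 : v ≠ 0) (hv1 : v ≠ 1) (hv2 : v ^ 2 ≠ 1) (hv3 : v ^ 3 ≠ 1) :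
    ((Finset.univ.filter
      (fun s : Finset (ZMod N) => s.card = 3 ∧ Finset.image (fun x => v * x) s = s)).card)
      = 0 := by
  classical
  rw [Finset.card_eq_zero, Finset.filter_eq_empty_iff]
  rintro s - ⟨h3, hfix⟩
  have hcl := closed_of_mem hfix
  by_cases h0 : (0 : ZMod N) ∈ s
  · exact hv2 (lemA hv0 hv1 h3 hcl h0).1
  · exact hv3 (lemB hv0 hv1 hv2 h3 hcl h0).1

end ThreeOrbitsAux

namespace ThreeOrbitsAux
variable {N : ℕ} [NeZero N]

lemma nat_card_fixed (u : (ZMod N)ˣ) :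
    Nat.card (MulAction.fixedBy (B N) u) =
      (Finset.univ.filter (fun s : Finset (ZMod N) =>
        s.card = 3 ∧ Finset.image (fun x => (u : ZMod N) * x) s = s)).card := by
  classical
  have e : MulAction.fixedBy (B N) u ≃ {s : Finset (ZMod N) //
      s.card = 3 ∧ Finset.image (fun x => (u : ZMod N) * x) s = s} :=
    { toFun := fun S => ⟨S.1.1, S.1.2, by
        have h := S.2
        rw [MulAction.mem_fixedBy] at h
        rw [← smul_val, h]⟩
      invFun := fun s => ⟨⟨s.1, s.2.1⟩, by
        rw [MulAction.mem_fixedBy]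
        apply Subtype.ext
        rw [smul_val]
        exact s.2.2⟩
      left_inv := fun S => by apply Subtype.ext; apply Subtype.ext; rfl
      right_inv := fun s => by apply Subtype.ext; rfl }
  rw [Nat.card_congr e, Nat.card_eq_fintype_card, Fintype.card_subtype]

lemma six_choose (n : ℕ) (h : 3 ≤ n) : 6 * n.choose 3 = n * (n - 1) * (n - 2) := by
  obtain ⟨m, rfl⟩ : ∃ m, n = m + 3 := ⟨n - 3, by omega⟩
  have h1 := Nat.choose_mul_factorial_mul_factorial (show 3 ≤ m + 3 by omega)
  simp only [Nat.add_sub_cancel] at h1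
  have h2 : Nat.factorial (m + 3) = ((m + 3) * ((m + 2) * (m + 1))) * Nat.factorial m := by
    rw [Nat.factorial_succ, Nat.factorial_succ, Nat.factorial_succ]; ring
  rw [h2, show (Nat.factorial 3) = 6 from rfl] at h1
  have h4 := Nat.eq_of_mul_eq_mul_right (Nat.factorial_pos m) h1
  show 6 * (m + 3).choose 3 = (m + 3) * (m + 2) * (m + 1)
  calc 6 * (m + 3).choose 3 = (m + 3).choose 3 * 6 := mul_comm _ _
    _ = (m + 3) * ((m + 2) * (m + 1)) := h4
    _ = (m + 3) * (m + 2) * (m + 1) := by ring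

end ThreeOrbitsAux

open ThreeOrbitsAux

/-- For a prime `N > 3` with `N ≡ 1 (mod 3)`, the number of orbits of the action of
`(ℤ/Nℤ)ˣ` on the `3`-element subsets of `ℤ/Nℤ` equals `(N² − 2N + 7)/6`. -/
theorem card_three_subset_orbits_one_mod_three (N : ℕ) (hN : N.Prime) (hN3 : 3 < N)
    (hmod : N % 3 = 1) :
    (Nat.card (Quot (subsetOrbitRel N 3)) : ℚ) =
      ((N : ℚ) ^ 2 - 2 * (N : ℚ) + 7) / 6 := by
  haveI : Fact N.Prime := ⟨hN⟩
  haveI : NeZero N := ⟨by omega⟩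
  classical
  have e0 : Quot (subsetOrbitRel N 3) ≃ Quotient (MulAction.orbitRel (ZMod N)ˣ (B N)) :=
    Quot.congrRight rel_iff
  have e1 : (Nat.card (Quot (subsetOrbitRel N 3)))
      = Fintype.card (Quotient (MulAction.orbitRel (ZMod N)ˣ (B N))) := by
    rw [Nat.card_congr e0, Nat.card_eq_fintype_card]
  have hcardG : Fintype.card (ZMod N)ˣ = N - 1 := by
    rw [ZMod.card_units_eq_totient, Nat.totient_prime hN]
  have hdvd2 : 2 ∣ N - 1 := by
    have : N % 2 = 1 := Nat.odd_iff.mp (hN.odd_of_ne_two (by omega))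
    omega
  have hdvd3 : 3 ∣ N - 1 := by omega
  have hfix : ∀ u : (ZMod N)ˣ, Nat.card (MulAction.fixedBy (B N) u) =
      if orderOf u = 1 then N.choose 3 else if orderOf u = 2 then (N - 1) / 2
      else if orderOf u = 3 then (N - 1) / 3 else 0 := by
    intro u
    rw [nat_card_fixed]
    have hval1 : orderOf u ≠ 1 → (u : ZMod N) ≠ 1 := by
      intro h1 h
      exact h1 (orderOf_eq_one_iff.mpr (Units.ext h))
    have hvalpow : ∀ k : ℕ, orderOf u = k → (u : ZMod N) ^ k = 1 := by
      intro k hk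
      have := pow_orderOf_eq_one u
      rw [hk] at this
      rw [← Units.val_pow_eq_pow_val, this, Units.val_one]
    by_cases h1 : orderOf u = 1
    · rw [if_pos h1]
      have hu1 : u = 1 := orderOf_eq_one_iff.mp h1
      subst hu1
      have heq : Finset.univ.filter (fun s : Finset (ZMod N) =>
          s.card = 3 ∧ Finset.image (fun x => ((1 : (ZMod N)ˣ) : ZMod N) * x) s = s)
          = Finset.univ.filter (fun s : Finset (ZMod N) => s.card = 3) := by
        apply Finset.filter_congr
        intro s _
        simp
      rw [heq, ← Fintype.card_subtype, Fintype.card_finset_len, ZMod.card]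
    rw [if_neg h1]
    by_cases h2 : orderOf u = 2
    · rw [if_pos h2]
      have hc := count_two hN3 (hval1 h1) (hvalpow 2 h2)
      omega
    rw [if_neg h2]
    by_cases h3 : orderOf u = 3
    · rw [if_pos h3]
      have hc := count_three hN3 (hval1 h1) (hvalpow 3 h3)
      omega
    rw [if_neg h3]
    have hvp2 : (u : ZMod N) ^ 2 ≠ 1 := by
      intro h
      have : u ^ 2 = 1 := Units.ext (by rw [Units.val_pow_eq_pow_val, h, Units.val_one])
      have := orderOf_dvd_of_pow_eq_one this
      rcases (Nat.dvd_prime Nat.prime_two).mp this with h' | h' <;> [exact h1 h'; exact h2 h']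
    have hvp3 : (u : ZMod N) ^ 3 ≠ 1 := by
      intro h
      have : u ^ 3 = 1 := Units.ext (by rw [Units.val_pow_eq_pow_val, h, Units.val_one])
      have := orderOf_dvd_of_pow_eq_one this
      rcases (Nat.dvd_prime Nat.prime_three).mp this with h' | h' <;> [exact h1 h'; exact h3 h']
    exact count_zero (Units.ne_zero u) (hval1 h1) hvp2 hvp3
  have hcyc : ∀ d : ℕ, d ∣ N - 1 →
      (Finset.univ.filter (fun u : (ZMod N)ˣ => orderOf u = d)).card = d.totient := by
    intro d hd
    have h := IsCyclic.card_orderOf_eq_totient (α := (ZMod N)ˣ) (d := d)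
      (by rw [hcardG]; exact hd)
    convert h using 2
  have hsplit : ∀ u : (ZMod N)ˣ, Fintype.card (MulAction.fixedBy (B N) u) =
      (if orderOf u = 1 then N.choose 3 else 0) + (if orderOf u = 2 then (N - 1) / 2 else 0)
        + (if orderOf u = 3 then (N - 1) / 3 else 0) := by
    intro u
    rw [← Nat.card_eq_fintype_card, hfix u]
    by_cases h1 : orderOf u = 1
    · simp [h1]
    by_cases h2 : orderOf u = 2
    · simp [h1, h2]
    by_cases h3 : orderOf u = 3
    · simp [h1, h2, h3]
    simp [h1, h2, h3]
  have hsum : (∑ u : (ZMod N)ˣ, Fintype.card (MulAction.fixedBy (B N) u))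
      = N.choose 3 + (N - 1) / 2 + 2 * ((N - 1) / 3) := by
    rw [Finset.sum_congr rfl (fun u _ => hsplit u), Finset.sum_add_distrib,
      Finset.sum_add_distrib, ← Finset.sum_filter, ← Finset.sum_filter, ← Finset.sum_filter,
      Finset.sum_const, Finset.sum_const, Finset.sum_const,
      hcyc 1 (one_dvd _), hcyc 2 hdvd2, hcyc 3 hdvd3,
      Nat.totient_one, Nat.totient_prime Nat.prime_two, Nat.totient_prime Nat.prime_three]
    simp only [smul_eq_mul]
    omega
  have hb := MulAction.sum_card_fixedBy_eq_card_orbits_mul_card_group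
    ((ZMod N)ˣ) (B N)
  rw [hsum, hcardG] at hb
  rw [e1]
  set Q := Fintype.card (Quotient (MulAction.orbitRel (ZMod N)ˣ (B N))) with hQ
  have hsix := six_choose N (by omega)
  set R := Q * (N - 1) with hR
  set P := N * (N - 1) * (N - 2) with hP
  have hkey : 6 * R = P + 7 * (N - 1) := by omega
  rw [hR, hP] at hkey
  have hcast := congrArg (Nat.cast : ℕ → ℚ) hkey
  rw [Nat.cast_mul, Nat.cast_mul, Nat.cast_add, Nat.cast_mul, Nat.cast_mul, Nat.cast_mul,
    Nat.cast_sub (show 1 ≤ N by omega), Nat.cast_sub (show 2 ≤ N by omega)] at hcast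
  push_cast at hcast
  have hne : ((N : ℚ) - 1) ≠ 0 := by
    have : (3 : ℚ) < N := by exact_mod_cast hN3
    linarith
  rw [eq_div_iff (by norm_num : (6 : ℚ) ≠ 0)]
  apply mul_right_cancel₀ hne
  linear_combination hcast
end

section
/- Let N be a prime with N > 3 and N ≡ 2 (mod 3). Then the number of orbits of the action of (ℤ/Nℤ)ˣ on the 3-element subsets of ℤ/Nℤ equals (N² − 2N + 3)/6. -/
open MulAction Pointwise
open Set (powersetCard)

namespace Finset

variable {G α : Type*} [Group G] [MulAction G α] [DecidableEq α] {g : G} {s : Finset α}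

def permOfSMulEq (hs : g • s = s) : Equiv.Perm s :=
  (toPerm g).subtypePerm fun x => by
    simpa only [toPerm_apply, hs] using smul_mem_smul_finset_iff (s := s) (b := x) g

theorem coe_permOfSMulEq_pow_apply (hs : g • s = s) (n : ℕ) (x : s) :
    ((permOfSMulEq hs ^ n) x : α) = g ^ n • (x : α) := by
  rw [permOfSMulEq, Equiv.Perm.subtypePerm_pow]
  change (toPermHom G α g ^ n) (x : α) = _
  rw [← map_pow]
  rfl

theorem pow_card_factorial_smul_of_smul_finset_eq (hs : g • s = s) {x : α} (hx : x ∈ s) :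
    g ^ s.card.factorial • x = x := by
  have h : permOfSMulEq hs ^ s.card.factorial = 1 := by
    rw [← Fintype.card_coe s, ← Fintype.card_perm]
    exact pow_card_eq_one
  rw [← coe_permOfSMulEq_pow_apply hs _ ⟨x, hx⟩, h, Equiv.Perm.one_apply]

theorem exists_smul_eq_self_of_pow_prime_pow_eq_one {p n : ℕ} [Fact p.Prime] (hg : g ^ p ^ n = 1)
    (hs : g • s = s) (hp : ¬ p ∣ s.card) : ∃ x ∈ s, g • x = x := by
  have h : permOfSMulEq hs ^ p ^ n = 1 := by
    ext x
    simp [coe_permOfSMulEq_pow_apply, hg]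
  obtain ⟨x, hx⟩ := Equiv.Perm.exists_fixed_point_of_prime (by rwa [Fintype.card_coe]) h
  exact ⟨x, x.2, congrArg Subtype.val hx⟩

end Finset

theorem MulAction.sum_natCard_fixedBy_eq_natCard_orbits_mul_natCard (G X : Type*) [Group G]
    [MulAction G X] [Fintype G] [Finite X] :
    ∑ g : G, Nat.card (fixedBy X g) = Nat.card (orbitRel.Quotient G X) * Nat.card G := by
  classical
  have := Fintype.ofFinite X
  simpa only [Nat.card_eq_fintype_card] using sum_card_fixedBy_eq_card_orbits_mul_card_group G X

theorem pow_eq_one_of_pow_mul_eq_one_of_coprime {G : Type*} [Group G] {g : G} {m n : ℕ}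
    (h : (Nat.card G).Coprime m) (hg : g ^ (n * m) = 1) : g ^ n = 1 :=
  (powCoprime h).injective (by simpa [pow_mul] using hg)

theorem Units.one_ne_neg_one_of_ringChar_ne_two {R : Type*} [Ring R] [Nontrivial R]
    (hR : ringChar R ≠ 2) : (1 : Rˣ) ≠ -1 := fun h =>
  Ring.neg_one_ne_one_of_char_ne_two hR (by simpa using (congrArg Units.val h).symm)

section Domain

variable {R : Type*} [Ring R] [IsDomain R] [DecidableEq R] {u : Rˣ} {s : Finset R}

theorem Units.pow_card_factorial_eq_one_of_smul_finset_eq (hs : 1 < s.card) (hu : u • s = s) :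
    u ^ s.card.factorial = 1 := by
  obtain ⟨x, hx, hx0⟩ := s.exists_mem_ne hs 0
  have hfix := s.pow_card_factorial_smul_of_smul_finset_eq hu hx
  rw [Units.smul_def, _root_.smul_eq_mul, mul_eq_right₀ hx0] at hfix
  exact Units.ext (by simpa using hfix)

theorem Units.eq_one_or_eq_neg_one_of_smul_finset_eq (h3 : ¬ 3 ∣ Nat.card Rˣ) (hs : s.card = 3)
    (hu : u • s = s) : u = 1 ∨ u = -1 := by
  have h6 : u ^ (2 * 3) = 1 := by
    simpa [hs, Nat.factorial] using Units.pow_card_factorial_eq_one_of_smul_finset_eq (by omega) hu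
  have hcop : (Nat.card Rˣ).Coprime 3 := (Nat.prime_three.coprime_iff_not_dvd.2 h3).symm
  have h2 : (u : R) ^ 2 = 1 := by
    rw [← Units.val_pow_eq_pow_val, pow_eq_one_of_pow_mul_eq_one_of_coprime hcop h6, Units.val_one]
  rcases sq_eq_one_iff.1 h2 with h | h
  · exact .inl (Units.ext h)
  · exact .inr (Units.ext (by rw [h, Units.val_neg, Units.val_one]))

theorem natCard_fixedBy_powersetCard_three_eq_zero (h3 : ¬ 3 ∣ Nat.card Rˣ) (h1 : u ≠ 1)
    (hn : u ≠ -1) : Nat.card (fixedBy (powersetCard R 3) u) = 0 := by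
  refine Nat.card_eq_zero.2 (.inl ⟨fun ⟨s, hs⟩ => ?_⟩)
  rw [mem_fixedBy, ← Subtype.coe_inj, powersetCard.coe_smul] at hs
  exact (Units.eq_one_or_eq_neg_one_of_smul_finset_eq h3 (powersetCard.card_eq s) hs).elim h1 hn

end Domain

section Field

variable {K : Type*} [Field K] [DecidableEq K]

theorem card_zero_one_neg_one (hK : ringChar K ≠ 2) : ({0, 1, -1} : Finset K).card = 3 := by
  have h1 : (1 : K) ≠ -1 := (Ring.neg_one_ne_one_of_char_ne_two hK).symm
  rw [Finset.card_insert_of_notMem (by simp), Finset.card_pair h1]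

theorem units_smul_zero_one_neg_one (u : Kˣ) :
    u • ({0, 1, -1} : Finset K) = {0, (u : K), -(u : K)} := by
  simp [Finset.smul_finset_insert, Units.smul_def]

def zeroOneNegOne (hK : ringChar K ≠ 2) : powersetCard K 3 :=
  powersetCard.ofCard (card_zero_one_neg_one hK)

@[simp]
theorem coe_zeroOneNegOne (hK : ringChar K ≠ 2) :
    (zeroOneNegOne hK : Finset K) = {0, 1, -1} :=
  rfl

theorem zero_mem_of_neg_one_smul_finset_eq (hK : ringChar K ≠ 2) {s : Finset K}
    (hs : (-1 : Kˣ) • s = s) (hodd : ¬ 2 ∣ s.card) : (0 : K) ∈ s := by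
  obtain ⟨z, hz, hz_neg⟩ :=
    s.exists_smul_eq_self_of_pow_prime_pow_eq_one (p := 2) (n := 1) (by simp) hs hodd
  simp only [Units.smul_def, Units.val_neg, Units.val_one, neg_one_smul] at hz_neg
  have h2z : 2 * z = 0 := by linear_combination -hz_neg
  rwa [← (mul_eq_zero.1 h2z).resolve_left (Ring.two_ne_zero hK)]

theorem fixedBy_neg_one_powersetCard_three (hK : ringChar K ≠ 2) :
    fixedBy (powersetCard K 3) (-1 : Kˣ) = orbit Kˣ (zeroOneNegOne hK) := by
  ext s
  rw [mem_fixedBy, ← Subtype.coe_inj, powersetCard.coe_smul]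
  constructor
  · intro hs
    have h0 := zero_mem_of_neg_one_smul_finset_eq hK hs (by simp)
    obtain ⟨x, hx, hx0⟩ := (s : Finset K).exists_mem_ne (by simp) 0
    have hnegx : -x ∈ (s : Finset K) := by
      rw [← hs]; exact Finset.mem_smul_finset.2 ⟨x, hx, by simp [Units.smul_def]⟩
    refine ⟨Units.mk0 x hx0, Subtype.ext (Finset.eq_of_subset_of_card_le ?_ ?_)⟩
    · rw [powersetCard.coe_smul, coe_zeroOneNegOne, units_smul_zero_one_neg_one]
      simp [Finset.insert_subset_iff, h0, hx, hnegx]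
    · simp only [powersetCard.card_eq, le_refl]
  · rintro ⟨u, rfl⟩
    rw [powersetCard.coe_smul, smul_comm, coe_zeroOneNegOne, units_smul_zero_one_neg_one (-1)]
    simp [Finset.pair_comm]

theorem stabilizer_zeroOneNegOne (hK : ringChar K ≠ 2) :
    (stabilizer Kˣ (zeroOneNegOne hK) : Set Kˣ) = {1, -1} := by
  ext u
  rw [SetLike.mem_coe, mem_stabilizer_iff, ← Subtype.coe_inj, powersetCard.coe_smul,
    coe_zeroOneNegOne, units_smul_zero_one_neg_one]
  constructor
  · intro hu
    have hu_mem : (u : K) ∈ ({0, 1, -1} : Finset K) := hu ▸ by simp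
    simp only [Finset.mem_insert, Finset.mem_singleton] at hu_mem
    rcases hu_mem with h | h | h
    · exact absurd h u.ne_zero
    · exact .inl (Units.ext h)
    · exact .inr (Units.ext (by simpa using h))
  · rintro (rfl | rfl) <;> simp [Finset.pair_comm]

theorem natCard_fixedBy_neg_one_powersetCard_three_mul_two (hK : ringChar K ≠ 2) :
    Nat.card (fixedBy (powersetCard K 3) (-1 : Kˣ)) * 2 = Nat.card K - 1 := by
  have hstab : Nat.card (stabilizer Kˣ (zeroOneNegOne hK)) = 2 := by
    rw [← SetLike.coe_sort_coe, stabilizer_zeroOneNegOne hK, Nat.card_coe_set_eq,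
      Set.ncard_pair (Units.one_ne_neg_one_of_ringChar_ne_two hK)]
  rw [fixedBy_neg_one_powersetCard_three hK, Nat.card_coe_set_eq, ← index_stabilizer, ← hstab,
    Subgroup.index_mul_card, Nat.card_units]

end Field

theorem natCard_orbitRel_quotient_powersetCard_three {K : Type*} [Field K] [Fintype K]
    [DecidableEq K] (hK : ringChar K ≠ 2) (h3 : Nat.card K % 3 = 2) :
    (Nat.card (orbitRel.Quotient Kˣ (powersetCard K 3)) : ℚ) =
      ((Nat.card K : ℚ) ^ 2 - 2 * Nat.card K + 3) / 6 := by
  set q := Nat.card K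
  set orbits := Nat.card (orbitRel.Quotient Kˣ (powersetCard K 3))
  have hq : 1 ≤ q := by omega
  have hburnside : q.choose 3 + Nat.card (fixedBy (powersetCard K 3) (-1 : Kˣ)) =
      orbits * (q - 1) := by
    rw [← Nat.card_units K, ← sum_natCard_fixedBy_eq_natCard_orbits_mul_natCard,
      Fintype.sum_eq_add 1 (-1) (Units.one_ne_neg_one_of_ringChar_ne_two hK) fun u hu =>
        natCard_fixedBy_powersetCard_three_eq_zero (by rw [Nat.card_units]; omega) hu.1 hu.2,
      fixedBy_one_eq_univ, Nat.card_univ, powersetCard.card]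
  have hfixed : Nat.card (fixedBy (powersetCard K 3) (-1 : Kˣ)) * 2 = q - 1 :=
    natCard_fixedBy_neg_one_powersetCard_three_mul_two hK
  have hchoose : (q.choose 3 : ℚ) * 6 = q * (q - 1) * (q - 2) := by
    simp [Nat.cast_choose_eq_descPochhammer_div, descPochhammer_succ_right, Nat.factorial]
  qify [hq] at hburnside hfixed
  have hq1 : (q : ℚ) - 1 ≠ 0 := by
    rw [sub_ne_zero]; exact_mod_cast (show q ≠ 1 by omega)
  refine mul_left_cancel₀ hq1 ?_
  linear_combination -hburnside + hchoose / 6 + hfixed / 2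

theorem natCard_quot_subsetOrbitRel (N d : ℕ) :
    Nat.card (Quot (subsetOrbitRel N d)) =
      Nat.card (orbitRel.Quotient (ZMod N)ˣ (powersetCard (ZMod N) d)) := by
  refine Nat.card_congr (Quot.congr
    (Equiv.subtypeEquivRight fun _ => powersetCard.mem_iff.symm) fun S S' => ?_)
  rw [orbitRel_apply, mem_orbit_symm, mem_orbit_iff]
  refine exists_congr fun u => ?_
  rw [← Subtype.coe_inj, powersetCard.coe_smul]
  -- `u • S` on finsets is `S.image (u • ·)` by definition
  rfl

/-- For a prime `N > 3` with `N ≡ 2 (mod 3)`, the number of orbits of the action of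
`(ℤ/Nℤ)ˣ` on the `3`-element subsets of `ℤ/Nℤ` equals `(N² − 2N + 3)/6`. -/
theorem card_three_subset_orbits_two_mod_three (N : ℕ) (hN : N.Prime) (hN3 : 3 < N)
    (hmod : N % 3 = 2) :
    (Nat.card (Quot (subsetOrbitRel N 3)) : ℚ) =
      ((N : ℚ) ^ 2 - 2 * (N : ℚ) + 3) / 6 := by
  have : Fact N.Prime := ⟨hN⟩
  have hchar : ringChar (ZMod N) ≠ 2 := by rw [ZMod.ringChar_zmod_n]; omega
  have hcard : Nat.card (ZMod N) % 3 = 2 := by rwa [Nat.card_zmod]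
  rw [natCard_quot_subsetOrbitRel, natCard_orbitRel_quotient_powersetCard_three hchar hcard,
    Nat.card_zmod]
end

section
/- Let N be a prime, 1 ≤ d < N, and let n = (n₁,…,n_d) be a d-tuple of pairwise distinct elements of ℤ/Nℤ such that the stabilizer of the set {n₁,…,n_d} under the multiplication action of (ℤ/Nℤ)ˣ is trivial (equivalently, the orbit of {n₁,…,n_d} has N−1 elements). Let D = diag(ω^{n₁},…,ω^{n_d}) with ω = exp(2πi/N). Then every unitary transformation U of ℂ^d satisfying U·{φ_{m,n} : m ∈ ℤ/Nℤ} = {φ_{m,n} : m ∈ ℤ/Nℤ} is of the form U = D^k for some integer k with 0 ≤ k ≤ N−1; that is, the symmetry group of the frame is the cyclic group generated by D. -/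
open scoped BigOperators

/-!
A unitary symmetry `U` of the frame preserves the inner products
`⟪φ_a, φ_b⟫ = d⁻¹ · ∑ₖ ω^((b - a)·n_k)`. For `N` prime the only rational linear relation among the
`N`-th roots of unity is that their sum vanishes, so this correlation determines the multiset
`{(b - a)·n_k}`; a trivial stabilizer then makes it injective in `b - a`. Hence `Uφ₀ = φ_t` forces
`Uφ_m = φ_(m+t) = D^t φ_m` for all `m`. The coordinate functions `m ↦ √d · φ_m(k) = ω^(n_k·m)`
are distinct, hence linearly independent, characters of `ℤ/Nℤ`, so the `φ_m` span `ℂ^d` and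
`U = D^t`.
-/

open Polynomial in
theorem IsPrimitiveRoot.eq_zero_of_aeval_eq_zero_of_eval_one_eq_zero {K : Type*} [Field K]
    [CharZero K] {p : ℕ} [hp : Fact p.Prime] {ζ : K} (hζ : IsPrimitiveRoot ζ p) {P : ℚ[X]}
    (hζP : aeval ζ P = 0) (hdeg : P.natDegree < p) (h1 : P.eval 1 = 0) : P = 0 := by
  have hdvd : cyclotomic p ℚ ∣ P :=
    cyclotomic_eq_minpoly_rat hζ hp.out.pos ▸ minpoly.dvd ℚ ζ hζP
  have hP := eq_leadingCoeff_mul_of_monic_of_dvd_of_natDegree_le (cyclotomic.monic p ℚ) hdvd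
    (by rw [natDegree_cyclotomic, Nat.totient_prime hp.out]; omega)
  rw [hP, eval_mul, eval_C, eval_one_cyclotomic_prime] at h1
  rw [hP, (mul_eq_zero.1 h1).resolve_right (by exact_mod_cast hp.out.ne_zero), C_0, zero_mul]

open Polynomial in
theorem IsPrimitiveRoot.map_eq_of_sum_pow_val_eq {K ι : Type*} [Field K] [CharZero K]
    [Fintype ι] {p : ℕ} [hp : Fact p.Prime] {ζ : K} (hζ : IsPrimitiveRoot ζ p)
    {f g : ι → ZMod p} (h : ∑ i, ζ ^ (f i).val = ∑ i, ζ ^ (g i).val) :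
    Finset.univ.val.map f = Finset.univ.val.map g := by
  classical
  let P : (ι → ZMod p) → ℚ[X] := fun f => ∑ i, X ^ (f i).val
  have coeff_P : ∀ f j, (P f).coeff j.val = (Finset.univ.val.map f).count j := by
    intro f j
    simp only [P, finsetSum_coeff, coeff_X_pow, (ZMod.val_injective p).eq_iff, Finset.sum_boole,
      Multiset.count_map, Nat.cast_inj]
    rfl
  have natDegree_P : ∀ f, (P f).natDegree < p := fun f =>
    lt_of_le_of_lt (natDegree_sum_le_of_forall_le _ _ fun i _ => (natDegree_X_pow_le _).trans
      (Nat.le_pred_of_lt (ZMod.val_lt (f i)))) (Nat.pred_lt hp.out.ne_zero)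
  have hP : P f - P g = 0 := hζ.eq_zero_of_aeval_eq_zero_of_eval_one_eq_zero
    (by simp [P, h]) ((natDegree_sub_le _ _).trans_lt (max_lt (natDegree_P f) (natDegree_P g)))
    (by simp [P, eval_finsetSum])
  ext j
  exact_mod_cast (coeff_P f j).symm.trans (sub_eq_zero.1 hP ▸ coeff_P g j)

theorem eq_of_image_mul_eq_image_mul {F : Type*} [Field F] {S : Set F}
    (hstab : ∀ u : Fˣ, (fun x => (u : F) * x) '' S = S → u = 1) {x : F} (hxS : x ∈ S)
    (hx : x ≠ 0) {a b : F} (h : (a * ·) '' S = (b * ·) '' S) : a = b := by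
  have eq_zero_of : ∀ a b : F, (a * ·) '' S = (b * ·) '' S → a = 0 → b = 0 := by
    intro a b h ha
    obtain ⟨y, -, hy⟩ : b * x ∈ (a * ·) '' S := h ▸ Set.mem_image_of_mem _ hxS
    simpa [ha, hx, eq_comm] using hy
  by_cases ha : a = 0
  · rw [ha, eq_zero_of a b h ha]
  have hb : b ≠ 0 := fun hb => ha (eq_zero_of b a h.symm hb)
  have hu : (fun x => ((Units.mk0 (b / a) (div_ne_zero hb ha) : Fˣ) : F) * x) '' S = S := by
    calc _ = (a⁻¹ * ·) '' ((b * ·) '' S) := by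
          rw [Set.image_image]; simp only [Units.val_mk0, div_eq_inv_mul, mul_assoc]
      _ = S := by rw [← h, Set.image_image]; simp [inv_mul_cancel_left₀ ha]
  simpa [Units.ext_iff, div_eq_one_iff_eq ha, eq_comm] using hstab _ hu

open Matrix ZMod

theorem Matrix.star_mulVec_dotProduct_mulVec {ι α : Type*} [Fintype ι] [DecidableEq ι]
    [CommRing α] [StarRing α] {U : Matrix ι ι α} (hU : U ∈ Matrix.unitaryGroup ι α)
    (x y : ι → α) : star (U *ᵥ x) ⬝ᵥ (U *ᵥ y) = star x ⬝ᵥ y := by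
  rw [star_mulVec, dotProduct_mulVec, vecMul_vecMul, ← star_eq_conjTranspose,
    (mem_unitaryGroup_iff').1 hU, vecMul_one]

theorem exp_pow_val_eq_stdAddChar {N : ℕ} [NeZero N] (x : ZMod N) :
    Complex.exp (2 * Real.pi * Complex.I / N) ^ x.val = stdAddChar x := by
  rw [← Complex.exp_nat_mul, stdAddChar_apply, toCircle_apply]
  ring_nf

theorem star_stdAddChar {N : ℕ} [NeZero N] (x : ZMod N) :
    star (stdAddChar x) = stdAddChar (-x) := by
  rw [AddChar.map_neg_eq_conj]; rfl

section DFTFrame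

variable {N d : ℕ} [NeZero N] {n : Fin d → ZMod N}

theorem dftVec_apply (m : ZMod N) (k : Fin d) :
    dftVec N d n m k = ((1 / √d : ℝ) : ℂ) * stdAddChar (m * n k) := by
  rw [dftVec, exp_pow_val_eq_stdAddChar]

theorem star_dftVec_dotProduct_dftVec (a b : ZMod N) :
    star (dftVec N d n a) ⬝ᵥ dftVec N d n b =
      (d : ℂ)⁻¹ * ∑ k, stdAddChar ((b - a) * n k) := by
  have hc : ((1 / √d : ℝ) : ℂ) ^ 2 = (d : ℂ)⁻¹ := by
    rw [← Complex.ofReal_pow, div_pow, Real.sq_sqrt d.cast_nonneg]; push_cast; ring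
  rw [dotProduct, Finset.mul_sum]
  refine Finset.sum_congr rfl fun k _ => ?_
  rw [Pi.star_apply, dftVec_apply, dftVec_apply, star_mul', star_stdAddChar, Complex.star_def,
    Complex.conj_ofReal, ← hc, sub_mul, sub_eq_neg_add, AddChar.map_add_eq_mul]
  ring

theorem diagonal_pow_mulVec_dftVec (t : ℕ) (m : ZMod N) :
    (diagonal fun j => Complex.exp (2 * Real.pi * Complex.I / N) ^ (n j).val) ^ t
      *ᵥ dftVec N d n m = dftVec N d n (m + t) := by
  ext k
  rw [diagonal_pow, mulVec_diagonal, Pi.pow_apply, dftVec_apply, dftVec_apply,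
    exp_pow_val_eq_stdAddChar, ← AddChar.map_nsmul_eq_pow, mul_left_comm,
    ← AddChar.map_add_eq_mul, nsmul_eq_mul]
  ring_nf

theorem eq_of_forall_mulVec_dftVec_eq (hn : Function.Injective n)
    {A B : Matrix (Fin d) (Fin d) ℂ}
    (h : ∀ m, A *ᵥ dftVec N d n m = B *ᵥ dftVec N d n m) : A = B := by
  ext k j
  have hc : ((1 / √d : ℝ) : ℂ) ≠ 0 := by
    have : (0 : ℝ) < d := by exact_mod_cast k.pos
    exact_mod_cast (one_div_pos.2 (Real.sqrt_pos.2 this)).ne'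
  have hli : LinearIndependent ℂ fun j => ⇑((stdAddChar (N := N)).mulShift (n j)) :=
    (AddChar.linearIndependent (ZMod N) ℂ).comp _
      ((AddChar.to_mulShift_inj_of_isPrimitive (isPrimitive_stdAddChar N)).comp hn)
  refine sub_eq_zero.1 (Fintype.linearIndependent_iff.1 hli (fun j => A k j - B k j) ?_ j)
  ext m
  have hm := congrFun (h m) k
  simp only [mulVec, dotProduct, dftVec_apply, mul_left_comm _ ((1 / √d : ℝ) : ℂ),
    ← Finset.mul_sum] at hm
  simpa [sub_mul, Finset.sum_sub_distrib, AddChar.mulShift_apply, mul_comm (n _)]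
    using sub_eq_zero.2 (mul_left_cancel₀ hc hm)

theorem sum_stdAddChar_mul_injective [Fact N.Prime]
    (hstab : ∀ u : (ZMod N)ˣ,
      (fun x => (u : ZMod N) * x) '' Set.range n = Set.range n → u = 1)
    {k₀ : Fin d} (hk₀ : n k₀ ≠ 0) :
    Function.Injective fun a : ZMod N => ∑ k, stdAddChar (a * n k) := by
  intro a b h
  simp only [← exp_pow_val_eq_stdAddChar] at h
  have hmap := (Complex.isPrimitiveRoot_exp N (NeZero.ne N)).map_eq_of_sum_pow_val_eq h
  refine eq_of_image_mul_eq_image_mul hstab (Set.mem_range_self k₀) hk₀ ?_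
  rw [← Set.range_comp, ← Set.range_comp]
  ext x
  simpa using congrArg (x ∈ ·) hmap

theorem mulVec_dftVec_eq_dftVec_add [Fact N.Prime]
    (hstab : ∀ u : (ZMod N)ˣ,
      (fun x => (u : ZMod N) * x) '' Set.range n = Set.range n → u = 1)
    {U : Matrix (Fin d) (Fin d) ℂ} (hU : U ∈ unitaryGroup (Fin d) ℂ)
    (hmaps : ∀ m, ∃ m', U *ᵥ dftVec N d n m = dftVec N d n m') {t : ZMod N}
    (ht : U *ᵥ dftVec N d n 0 = dftVec N d n t) (m : ZMod N) :
    U *ᵥ dftVec N d n m = dftVec N d n (m + t) := by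
  obtain ⟨m', hm'⟩ := hmaps m
  by_cases hn0 : ∀ k, n k = 0
  · have hconst : ∀ a, dftVec N d n a = dftVec N d n 0 := fun a => by
      ext k; simp [dftVec, hn0]
    rw [hconst m, ht, hconst t, hconst (m + t)]
  obtain ⟨k₀, hk₀⟩ := not_forall.1 hn0
  have hd : (d : ℂ)⁻¹ ≠ 0 := inv_ne_zero (by exact_mod_cast k₀.pos.ne')
  have hip := star_mulVec_dotProduct_mulVec hU (dftVec N d n m) (dftVec N d n 0)
  rw [hm', ht, star_dftVec_dotProduct_dftVec, star_dftVec_dotProduct_dftVec] at hip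
  have hm't := sum_stdAddChar_mul_injective hstab hk₀ (mul_left_cancel₀ hd hip)
  rw [hm', show m' = m + t by linear_combination -hm't]

end DFTFrame

theorem symmetry_group_eq_zpowers_diagonal_general (N d : ℕ) [NeZero N] (hN : N.Prime)
    (n : Fin d → ZMod N) (hn : Function.Injective n)
    (hstab : ∀ u : (ZMod N)ˣ,
      (fun x => (u : ZMod N) * x) '' Set.range n = Set.range n → u = 1) :
    ∀ U : Matrix (Fin d) (Fin d) ℂ, U ∈ Matrix.unitaryGroup (Fin d) ℂ →
      (fun v => U.mulVec v) '' Set.range (dftVec N d n) = Set.range (dftVec N d n) →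
      ∃ k ≤ N - 1,
        U = (Matrix.diagonal fun j =>
              Complex.exp (2 * Real.pi * Complex.I / N) ^ (n j).val) ^ k := by
  intro U hU himg
  have : Fact N.Prime := ⟨hN⟩
  have hmaps : ∀ m, ∃ m', U *ᵥ dftVec N d n m = dftVec N d n m' := fun m =>
    (himg.subset ⟨_, ⟨m, rfl⟩, rfl⟩).imp fun _ => Eq.symm
  obtain ⟨t, ht⟩ := hmaps 0
  refine ⟨t.val, Nat.le_sub_one_of_lt t.val_lt, eq_of_forall_mulVec_dftVec_eq hn fun m => ?_⟩
  rw [mulVec_dftVec_eq_dftVec_add hstab hU hmaps ht, diagonal_pow_mulVec_dftVec,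
    natCast_zmod_val]

/-- If the set of generators `{n₁,…,n_d}` has trivial stabilizer under the
multiplication action of `(ℤ/Nℤ)ˣ` (i.e. its orbit has `N−1` elements), then every
unitary transformation mapping the frame `{φ_{m,n} : m ∈ ℤ/Nℤ}` onto itself is a
power `D^k`, `0 ≤ k ≤ N−1`, of the diagonal matrix `D = diag(ω^{n₁},…,ω^{n_d})`:
the symmetry group of the frame is the cyclic group generated by `D`. -/
theorem symmetry_group_eq_zpowers_diagonal (N d : ℕ) [NeZero N] (hN : N.Prime)
    (hd : 1 ≤ d) (hdN : d < N) (n : Fin d → ZMod N) (hn : Function.Injective n)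
    (hstab : ∀ u : (ZMod N)ˣ,
      (fun x => (u : ZMod N) * x) '' Set.range n = Set.range n → u = 1) :
    ∀ U : Matrix (Fin d) (Fin d) ℂ, U ∈ Matrix.unitaryGroup (Fin d) ℂ →
      (fun v => U.mulVec v) '' Set.range (dftVec N d n) = Set.range (dftVec N d n) →
      ∃ k ≤ N - 1,
        U = (Matrix.diagonal fun j =>
              Complex.exp (2 * Real.pi * Complex.I / N) ^ (n j).val) ^ k :=
  symmetry_group_eq_zpowers_diagonal_general N d hN n hn hstab
end
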